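/- arXiv:2411.01290 — 4 statements merged into one kernel-verified Lean document; each statement's English description precedes it below -/
import Mathlib

section
/- Let Φ be an n-dimensional Young function and assume there exist a convex body L with 0 ∈ int L and a non-decreasing function a : (0,∞) → (0,∞) such that {Φ ≤ s} = a(s)L° for every s > 0, where L° is the polar body of L. Then there exists a Young function A : [0,∞) → [0,∞] such that: Φ(ξ) = A(h_L(ξ)) for all ξ ∈ ℝⁿ, where h_L is the support function of L; Φ_•(ξ) = A_•(H_0^L(ξ)) for all ξ ∈ ℝⁿ, where H_0^L is the gauge function of L and A_• is the Young conjugate of A; h_{{Φ ≤ s}}(ξ) = A^{−1}(s) H_0^L(ξ) for all s ≥ 0 and ξ ∈ ℝⁿ; and h_{{Φ_• ≤ s}}(ξ) = A_•^{−1}(s) h_L(ξ) for all s ≥ 0 and ξ ∈ ℝⁿ, where A^{−1} and A_•^{−1} denote generalized right-continuous inverses. -/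
open MeasureTheory Filter Set
open scoped ENNReal NNReal Topology Pointwise symmDiff RealInnerProductSpace

noncomputable section

/-- Euclidean space `ℝⁿ`. -/
abbrev Euc (n : ℕ) := EuclideanSpace ℝ (Fin n)

/-- Convexity for `ℝ≥0∞`-valued functions on `ℝⁿ`. -/
def ConvexOnE {n : ℕ} (Φ : Euc n → ℝ≥0∞) : Prop :=
  ∀ x y : Euc n, ∀ a b : ℝ, 0 ≤ a → 0 ≤ b → a + b = 1 →
    Φ (a • x + b • y) ≤ ENNReal.ofReal a * Φ x + ENNReal.ofReal b * Φ y

/-- Strict convexity for `ℝ≥0∞`-valued functions on `ℝⁿ`. -/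
def StrictConvexOnE {n : ℕ} (Φ : Euc n → ℝ≥0∞) : Prop :=
  ∀ x y : Euc n, x ≠ y → ∀ a b : ℝ, 0 < a → 0 < b → a + b = 1 →
    Φ (a • x + b • y) < ENNReal.ofReal a * Φ x + ENNReal.ofReal b * Φ y

/-- An `n`-dimensional Young function: convex, lower semicontinuous, finite near `0`,
vanishing at `0`, tending to `∞` at infinity. -/
structure IsNYoung {n : ℕ} (Φ : Euc n → ℝ≥0∞) : Prop where
  convex : ConvexOnE Φ
  lsc : LowerSemicontinuous Φ
  finite_near_zero : ∃ ε : ℝ, 0 < ε ∧ ∀ x : Euc n, ‖x‖ < ε → Φ x ≠ ⊤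
  map_zero : Φ 0 = 0
  coercive : Tendsto Φ (Bornology.cobounded (Euc n)) (𝓝 ⊤)

/-- A convex body: a compact convex set. -/
def IsConvexBody {n : ℕ} (K : Set (Euc n)) : Prop :=
  IsCompact K ∧ Convex ℝ K

/-- The Young conjugate (Legendre transform) `Φ_•(ξ) = sup_η (⟨ξ,η⟩ - Φ(η))`,
`ℝ≥0∞`-valued (the supremum is nonnegative whenever `Φ 0 = 0`). -/
def yconj {n : ℕ} (Φ : Euc n → ℝ≥0∞) (ξ : Euc n) : ℝ≥0∞ :=
  ⨆ η : Euc n, ENNReal.ofReal ⟪ξ, η⟫ - Φ η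

/-- The subgradient of an `ℝ≥0∞`-valued function. -/
def subgrad {n : ℕ} (Ψ : Euc n → ℝ≥0∞) (ξ : Euc n) : Set (Euc n) :=
  {ζ | ∀ η : Euc n, (Ψ ξ : EReal) + ((⟪ζ, η - ξ⟫ : ℝ) : EReal) ≤ (Ψ η : EReal)}

/-- The support function of a set, real-valued. -/
def suppFnR {n : ℕ} (C : Set (Euc n)) (ξ : Euc n) : ℝ :=
  sSup ((fun η => ⟪ξ, η⟫) '' C)

/-- The support function of a set, `EReal`-valued. -/
def suppFnE {n : ℕ} (C : Set (Euc n)) (ξ : Euc n) : EReal :=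
  ⨆ η ∈ C, ((⟪ξ, η⟫ : ℝ) : EReal)

/-- The polar body `L° = {x : ⟨x,y⟩ ≤ 1 ∀ y ∈ L}`. -/
def polarBody {n : ℕ} (L : Set (Euc n)) : Set (Euc n) :=
  {x | ∀ y ∈ L, ⟪x, y⟫ ≤ 1}

/-- `E^K`: the dilate `cK` of `K` with `|cK| = |E|`. -/
def setSymm {n : ℕ} (K E : Set (Euc n)) : Set (Euc n) :=
  (((volume E).toReal / (volume K).toReal) ^ ((1 : ℝ) / n)) • K

/-- The distribution function `μ(t) = |{u > t}|`. -/
def distFn {n : ℕ} (u : Euc n → ℝ) (t : ℝ) : ℝ≥0∞ := volume {x | t < u x}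

/-- The decreasing rearrangement `u*(s) = inf {t : μ(t) ≤ s}`. -/
def decRearr {n : ℕ} (u : Euc n → ℝ) (s : ℝ) : ℝ :=
  sInf {t : ℝ | distFn u t ≤ ENNReal.ofReal s}

/-- The symmetral `u^K(x) = u*(|K| H₀^K(x)ⁿ)` of `u` with respect to `K`. -/
def funcSymm {n : ℕ} (K : Set (Euc n)) (u : Euc n → ℝ) (x : Euc n) : ℝ :=
  decRearr u ((volume K).toReal * gauge K x ^ n)

/-- The symmetral `Ψ_K` of an `n`-dimensional Young function `Ψ` with respect to `K`,
characterized by `{Ψ_K ≤ t} = −({Ψ ≤ t}^K)`; equivalently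
`Ψ_K(ξ) = inf {t : |K| H₀^K(−ξ)ⁿ ≤ |{Ψ ≤ t}|}`. -/
def youngSymm {n : ℕ} (K : Set (Euc n)) (Ψ : Euc n → ℝ≥0∞) (ξ : Euc n) : ℝ≥0∞ :=
  sInf {t : ℝ≥0∞ | volume K * ENNReal.ofReal (gauge K (-ξ) ^ n) ≤ volume {η | Ψ η ≤ t}}

/-- The essential infimum of a real function on `ℝⁿ`, valued in `EReal`. -/
def eInf {n : ℕ} (u : Euc n → ℝ) : EReal := essInf (fun x => (u x : EReal)) volume

/-- The essential supremum of a real function on `ℝⁿ`, valued in `EReal`. -/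
def eSup {n : ℕ} (u : Euc n → ℝ) : EReal := essSup (fun x => (u x : EReal)) volume

/-- `u ∈ M_d(ℝⁿ)`: measurable with `|{u > t}| < ∞` for all `t > ess inf u`. -/
def MemMd {n : ℕ} (u : Euc n → ℝ) : Prop :=
  Measurable u ∧ ∀ t : ℝ, eInf u < (t : EReal) → distFn u t < ⊤

/-- `g` is the weak gradient of `u ∈ W^{1,1}_loc(ℝⁿ)`. -/
def HasWeakGradient {n : ℕ} (u : Euc n → ℝ) (g : Euc n → Euc n) : Prop :=
  LocallyIntegrable u volume ∧ LocallyIntegrable g volume ∧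
    ∀ φ : Euc n → ℝ, ContDiff ℝ (⊤ : ℕ∞) φ → HasCompactSupport φ →
      ∀ v : Euc n, ∫ x, u x * fderiv ℝ φ x v = - ∫ x, ⟪g x, v⟫ * φ x

/-- `u ∈ V^{1,Φ}_d(ℝⁿ)`, with weak gradient `g` and `∫ Φ(∇u) < ∞`. -/
def MemV1d {n : ℕ} (Φ : Euc n → ℝ≥0∞) (u : Euc n → ℝ) (g : Euc n → Euc n) : Prop :=
  HasWeakGradient u g ∧ MemMd u ∧ ∫⁻ x, Φ (g x) < ⊤

/-- A one-dimensional Young function (on `[0,∞)`, extended arbitrarily to `ℝ`). -/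
structure IsYoung1 (A : ℝ → ℝ≥0∞) : Prop where
  map_zero : A 0 = 0
  convex : ∀ x y : ℝ, 0 ≤ x → 0 ≤ y → ∀ a b : ℝ, 0 ≤ a → 0 ≤ b → a + b = 1 →
    A (a * x + b * y) ≤ ENNReal.ofReal a * A x + ENNReal.ofReal b * A y
  left_cont : ∀ t : ℝ, 0 < t → Tendsto A (𝓝[<] t) (𝓝 (A t))
  nonconst : ∃ s t : ℝ, 0 < s ∧ 0 < t ∧ A s ≠ A t

/-- The Young conjugate of a one-dimensional Young function. -/
def yconj1 (A : ℝ → ℝ≥0∞) (t : ℝ) : ℝ≥0∞ :=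
  ⨆ (s : ℝ) (_ : 0 ≤ s), ENNReal.ofReal (s * t) - A s

/-- The generalized (right-continuous) inverse of a one-dimensional Young function. -/
def rinv (A : ℝ → ℝ≥0∞) (s : ℝ≥0∞) : ℝ :=
  sSup {t : ℝ | 0 ≤ t ∧ A t ≤ s}

section statement7aux

open Bornology

variable {n : ℕ} {L : Set (Euc n)}

lemma st7_suppFn_isGreatest (hLc : IsCompact L) (hne : L.Nonempty) (ξ : Euc n) :
    IsGreatest ((fun η => ⟪ξ, η⟫) '' L) (suppFnR L ξ) := by
  have hcont : ContinuousOn (fun η : Euc n => ⟪ξ, η⟫) L :=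
    (continuous_const.inner continuous_id).continuousOn
  obtain ⟨y, hyL, hy⟩ := hLc.exists_isMaxOn hne hcont
  have hg : IsGreatest ((fun η => ⟪ξ, η⟫) '' L) ⟪ξ, y⟫ :=
    ⟨mem_image_of_mem _ hyL, by rintro z ⟨w, hw, rfl⟩; exact hy hw⟩
  have : suppFnR L ξ = ⟪ξ, y⟫ := hg.csSup_eq
  rw [this]; exact hg

lemma st7_le_suppFn (hLc : IsCompact L) (hne : L.Nonempty) (ξ : Euc n) {y : Euc n} (hy : y ∈ L) :
    ⟪ξ, y⟫ ≤ suppFnR L ξ := (st7_suppFn_isGreatest hLc hne ξ).2 (mem_image_of_mem _ hy)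

lemma st7_suppFn_le_iff (hLc : IsCompact L) (hne : L.Nonempty) (ξ : Euc n) (r : ℝ) :
    suppFnR L ξ ≤ r ↔ ∀ y ∈ L, ⟪ξ, y⟫ ≤ r := by
  constructor
  · intro h y hy; exact (st7_le_suppFn hLc hne ξ hy).trans h
  · intro h
    obtain ⟨⟨w, hw, hval⟩, _⟩ := st7_suppFn_isGreatest hLc hne ξ
    rw [← hval]; exact h w hw

lemma st7_suppFn_nonneg (hLc : IsCompact L) (h0 : (0 : Euc n) ∈ L) (ξ : Euc n) :
    0 ≤ suppFnR L ξ := by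
  have := st7_le_suppFn hLc ⟨0, h0⟩ ξ h0
  simpa using this

lemma st7_suppFn_smul (hLc : IsCompact L) (hne : L.Nonempty) {r : ℝ} (hr : 0 ≤ r) (ξ : Euc n) :
    suppFnR L (r • ξ) = r * suppFnR L ξ := by
  obtain ⟨⟨w, hw, hval⟩, hub⟩ := st7_suppFn_isGreatest hLc hne ξ
  have hg : IsGreatest ((fun η => ⟪r • ξ, η⟫) '' L) (r * suppFnR L ξ) := by
    constructor
    · exact ⟨w, hw, by simp only [real_inner_smul_left]; rw [← hval]⟩
    · rintro z ⟨v, hv, rfl⟩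
      simp only [real_inner_smul_left]
      exact mul_le_mul_of_nonneg_left (hub (mem_image_of_mem _ hv)) hr
  exact hg.csSup_eq

lemma st7_suppFn_zero (hLc : IsCompact L) (hne : L.Nonempty) : suppFnR L (0 : Euc n) = 0 := by
  have := st7_suppFn_smul hLc hne (le_refl (0 : ℝ)) 0
  simpa using this

lemma st7_suppFn_pos (hLc : IsCompact L) (h0L : (0 : Euc n) ∈ interior L)
    {ξ : Euc n} (hξ : ξ ≠ 0) : 0 < suppFnR L ξ := by
  have hne : L.Nonempty := ⟨0, interior_subset h0L⟩
  obtain ⟨ε, hε, hball⟩ := Metric.mem_nhds_iff.1 (mem_interior_iff_mem_nhds.1 h0L)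
  have hξn : 0 < ‖ξ‖ := norm_pos_iff.2 hξ
  set y : Euc n := (ε / (2 * ‖ξ‖)) • ξ with hy
  have hyL : y ∈ L := by
    apply hball
    rw [mem_ball_zero_iff, hy, norm_smul]
    rw [Real.norm_eq_abs, abs_of_pos (by positivity)]
    rw [div_mul_eq_mul_div, mul_comm (2 : ℝ) ‖ξ‖, ← div_div, mul_div_assoc]
    rw [div_self hξn.ne', mul_one]
    linarith
  have h1 : ⟪ξ, y⟫ ≤ suppFnR L ξ := st7_le_suppFn hLc hne ξ hyL
  have h2 : ⟪ξ, y⟫ = (ε / (2 * ‖ξ‖)) * ‖ξ‖ ^ 2 := by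
    rw [hy, real_inner_smul_right, real_inner_self_eq_norm_sq]
  refine lt_of_lt_of_le ?_ h1
  rw [h2]; positivity

lemma st7_gauge_pos (hLc : IsCompact L) (h0L : (0 : Euc n) ∈ interior L)
    {ξ : Euc n} (hξ : ξ ≠ 0) : 0 < gauge L ξ :=
  (gauge_pos (absorbent_nhds_zero (mem_interior_iff_mem_nhds.1 h0L))
    ((NormedSpace.isVonNBounded_iff ℝ).2 hLc.isBounded)).2 hξ

lemma st7_gauge_inv_smul_mem (hL : IsConvexBody L) (h0L : (0 : Euc n) ∈ interior L)
    {ξ : Euc n} (hξ : ξ ≠ 0) : (gauge L ξ)⁻¹ • ξ ∈ L := by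
  have hg := st7_gauge_pos hL.1 h0L hξ
  have h1 : gauge L ((gauge L ξ)⁻¹ • ξ) ≤ 1 := by
    rw [gauge_smul_of_nonneg (inv_nonneg.2 hg.le), smul_eq_mul, inv_mul_cancel₀ hg.ne']
  have := (gauge_le_one_iff_mem_closure hL.2 (mem_interior_iff_mem_nhds.1 h0L)).1 h1
  rwa [hL.1.isClosed.closure_eq] at this

lemma st7_inner_le (hL : IsConvexBody L) (h0L : (0 : Euc n) ∈ interior L) (ξ η : Euc n) :
    ⟪ξ, η⟫ ≤ gauge L ξ * suppFnR L η := by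
  have hne : L.Nonempty := ⟨0, interior_subset h0L⟩
  rcases eq_or_ne ξ 0 with rfl | hξ
  · simp [gauge_zero]
  · have hg := st7_gauge_pos hL.1 h0L hξ
    have hx0 : (gauge L ξ)⁻¹ • ξ ∈ L := st7_gauge_inv_smul_mem hL h0L hξ
    have h1 : ⟪η, (gauge L ξ)⁻¹ • ξ⟫ ≤ suppFnR L η := st7_le_suppFn hL.1 hne η hx0
    have h2 : ⟪η, (gauge L ξ)⁻¹ • ξ⟫ = (gauge L ξ)⁻¹ * ⟪ξ, η⟫ := by
      rw [real_inner_smul_right, real_inner_comm]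
    rw [h2] at h1
    calc ⟪ξ, η⟫ = gauge L ξ * ((gauge L ξ)⁻¹ * ⟪ξ, η⟫) := by
          rw [← mul_assoc, mul_inv_cancel₀ hg.ne', one_mul]
      _ ≤ gauge L ξ * suppFnR L η := mul_le_mul_of_nonneg_left h1 hg.le

lemma st7_dual_attain (hL : IsConvexBody L) (h0L : (0 : Euc n) ∈ interior L) (ξ : Euc n) :
    ∃ η : Euc n, suppFnR L η ≤ 1 ∧ ⟪ξ, η⟫ = gauge L ξ := by
  have hne : L.Nonempty := ⟨0, interior_subset h0L⟩
  rcases eq_or_ne ξ 0 with rfl | hξ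
  · exact ⟨0, by rw [st7_suppFn_zero hL.1 hne]; norm_num, by simp [gauge_zero]⟩
  have hg := st7_gauge_pos hL.1 h0L hξ
  set g := gauge L ξ with hgdef
  set x0 : Euc n := g⁻¹ • ξ with hx0
  have hx0L : x0 ∈ L := st7_gauge_inv_smul_mem hL h0L hξ
  have hx0ni : x0 ∉ interior L := by
    intro hmem
    have h1 : gauge L x0 < 1 := interior_subset_gauge_lt_one L hmem
    have h2 : gauge L x0 = 1 := by
      rw [hx0, gauge_smul_of_nonneg (inv_nonneg.2 hg.le), smul_eq_mul, inv_mul_cancel₀ hg.ne']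
    rw [h2] at h1; exact lt_irrefl _ h1
  obtain ⟨f, hf⟩ := geometric_hahn_banach_open_point (hL.2.interior) isOpen_interior hx0ni
  have hfx0 : 0 < f x0 := by
    have := hf 0 h0L; simpa using this
  have hfL : ∀ y ∈ L, f y ≤ f x0 := by
    intro y hy
    by_contra hlt
    push_neg at hlt
    set t : ℝ := (1 - f x0 / f y) / 2 with htdef
    have hfy : 0 < f y := lt_trans hfx0 hlt
    have hratio : f x0 / f y < 1 := (div_lt_one hfy).2 hlt
    have ht0 : 0 < t := by simp only [htdef]; linarith
    have ht1 : t < 1 := by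
      have : 0 < f x0 / f y := div_pos hfx0 hfy
      simp only [htdef]; linarith
    have hmem : t • (0 : Euc n) + (1 - t) • y ∈ interior L :=
      hL.2.combo_interior_closure_mem_interior h0L (subset_closure hy) ht0
        (by linarith) (by ring)
    have hflt := hf _ hmem
    rw [map_add, f.map_smul, f.map_smul] at hflt
    simp only [map_zero, smul_zero, smul_eq_mul, zero_add] at hflt
    have h1t : 1 - t = (1 + f x0 / f y) / 2 := by rw [htdef]; ring
    rw [h1t] at hflt
    have : (1 + f x0 / f y) / 2 * f y = (f y + f x0) / 2 := by
      field_simp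
    nlinarith [div_pos hfx0 hfy]
  set η1 : Euc n := (InnerProductSpace.toDual ℝ (Euc n)).symm f with hη1
  have hη1app : ∀ y : Euc n, ⟪η1, y⟫ = f y := fun y => InnerProductSpace.toDual_symm_apply
  refine ⟨(f x0)⁻¹ • η1, ?_, ?_⟩
  · rw [st7_suppFn_le_iff hL.1 hne]
    intro y hy
    rw [real_inner_smul_left, hη1app]
    have := hfL y hy
    rw [inv_mul_le_iff₀ hfx0]
    nlinarith
  · have hξeq : ξ = g • x0 := by rw [hx0, smul_inv_smul₀ hg.ne']
    have hfξ : f ξ = g * f x0 := by rw [hξeq, f.map_smul, smul_eq_mul]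
    rw [real_inner_comm, real_inner_smul_left, hη1app, hfξ, mul_comm g (f x0), ← mul_assoc,
      inv_mul_cancel₀ hfx0.ne', one_mul]

end statement7aux

/-- **Lemma (Young functions with homothetic sub-level sets).** -/
theorem statement7 {n : ℕ} (hn : 1 ≤ n)
    (Φ : Euc n → ℝ≥0∞) (hΦ : IsNYoung Φ)
    (L : Set (Euc n)) (hL : IsConvexBody L) (h0L : (0 : Euc n) ∈ interior L)
    (a : ℝ → ℝ) (ha : MonotoneOn a (Ioi 0)) (hapos : ∀ s ∈ Ioi (0 : ℝ), 0 < a s)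
    (hlevel : ∀ s : ℝ, 0 < s → {ξ : Euc n | Φ ξ ≤ ENNReal.ofReal s} = a s • polarBody L) :
    ∃ A : ℝ → ℝ≥0∞, IsYoung1 A ∧
      (∀ ξ : Euc n, Φ ξ = A (suppFnR L ξ)) ∧
      (∀ ξ : Euc n, yconj Φ ξ = yconj1 A (gauge L ξ)) ∧
      (∀ s : ℝ, 0 ≤ s → ∀ ξ : Euc n,
        suppFnR {η : Euc n | Φ η ≤ ENNReal.ofReal s} ξ = rinv A (ENNReal.ofReal s) * gauge L ξ) ∧
      (∀ s : ℝ, 0 ≤ s → ∀ ξ : Euc n,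
        suppFnR {η : Euc n | yconj Φ η ≤ ENNReal.ofReal s} ξ =
          rinv (yconj1 A) (ENNReal.ofReal s) * suppFnR L ξ) := by
  have hLc : IsCompact L := hL.1
  have h0mem : (0 : Euc n) ∈ L := interior_subset h0L
  have hne : L.Nonempty := ⟨0, h0mem⟩
  have hapos' : ∀ s : ℝ, 0 < s → 0 < a s := fun s hs => hapos s (mem_Ioi.2 hs)
  -- the one-dimensional Young function
  set A : ℝ → ℝ≥0∞ := fun t => ⨅ (s : ℝ) (_ : 0 < s) (_ : t ≤ a s), ENNReal.ofReal s with hAdef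
  have hAle : ∀ t s : ℝ, 0 < s → t ≤ a s → A t ≤ ENNReal.ofReal s := fun t s hs h =>
    iInf_le_of_le s (iInf_le_of_le hs (iInf_le _ h))
  have hAlt : ∀ (t : ℝ) (x : ℝ≥0∞), A t < x →
      ∃ s : ℝ, 0 < s ∧ t ≤ a s ∧ ENNReal.ofReal s < x := by
    intro t x h
    by_contra hc
    push_neg at hc
    have : x ≤ A t := le_iInf fun s => le_iInf fun hs => le_iInf fun hts => hc s hs hts
    exact absurd h (not_lt.2 this)
  have hAmono : Monotone A := fun t t' h =>
    le_iInf fun s => le_iInf fun hs => le_iInf fun hts => hAle t s hs (h.trans hts)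
  -- sublevel characterization
  have hE : ∀ (η : Euc n) (s : ℝ), 0 < s → (Φ η ≤ ENNReal.ofReal s ↔ suppFnR L η ≤ a s) := by
    intro η s hs
    have hmem : Φ η ≤ ENNReal.ofReal s ↔ η ∈ a s • polarBody L := by
      rw [← hlevel s hs]; rfl
    rw [hmem, Set.mem_smul_set_iff_inv_smul_mem₀ (hapos' s hs).ne',
      st7_suppFn_le_iff hLc hne]
    simp only [polarBody, mem_setOf_eq, real_inner_smul_left, inv_mul_eq_div,
      div_le_one (hapos' s hs)]
  -- Φ = A ∘ h_L
  have hPhiA : ∀ ξ : Euc n, Φ ξ = A (suppFnR L ξ) := by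
    intro ξ
    apply le_antisymm
    · exact le_iInf fun s => le_iInf fun hs => le_iInf fun hle => (hE ξ s hs).2 hle
    · by_contra hc
      push_neg at hc
      obtain ⟨r, _, h1, h2⟩ := ENNReal.lt_iff_exists_real_btwn.1 hc
      have hrpos : 0 < r := by
        by_contra h
        push_neg at h
        rw [ENNReal.ofReal_of_nonpos h] at h1
        exact absurd h1 (by simp)
      have hsub : suppFnR L ξ ≤ a r := (hE ξ r hrpos).1 h1.le
      exact absurd ((hAle _ r hrpos hsub).trans_lt h2) (lt_irrefl _)
  have hA0 : A 0 = 0 := by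
    refine le_antisymm ?_ zero_le
    refine ENNReal.le_of_forall_pos_le_add fun ε hε _ => ?_
    have hεR : (0 : ℝ) < ε := hε
    calc A 0 ≤ ENNReal.ofReal ε := hAle 0 ε hεR (hapos' ε hεR).le
      _ = (ε : ℝ≥0∞) := ENNReal.ofReal_coe_nnreal
      _ ≤ 0 + ε := by rw [zero_add]
  -- the reference direction
  have hn' : (0 : ℕ) < n := hn
  set e0 : Euc n := EuclideanSpace.single ⟨0, hn'⟩ (1 : ℝ) with he0def
  have he0 : e0 ≠ 0 := by
    intro h
    have h2 : e0 ⟨0, hn'⟩ = 0 := by rw [h]; rfl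
    rw [he0def, EuclideanSpace.single_apply] at h2
    simp at h2
  set c : ℝ := suppFnR L e0 with hcdef
  have hc : 0 < c := st7_suppFn_pos hLc h0L he0
  have hsupp_ray : ∀ t : ℝ, 0 ≤ t → suppFnR L ((t / c) • e0) = t := by
    intro t ht
    rw [st7_suppFn_smul hLc hne (div_nonneg ht hc.le), ← hcdef, div_mul_cancel₀ _ hc.ne']
  -- convexity of A
  have hAconv : ∀ x y : ℝ, 0 ≤ x → 0 ≤ y → ∀ α β : ℝ, 0 ≤ α → 0 ≤ β → α + β = 1 →
      A (α * x + β * y) ≤ ENNReal.ofReal α * A x + ENNReal.ofReal β * A y := by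
    intro x y hx hy α β hα hβ hαβ
    have hxA : A x = Φ ((x / c) • e0) := by rw [hPhiA, hsupp_ray x hx]
    have hyA : A y = Φ ((y / c) • e0) := by rw [hPhiA, hsupp_ray y hy]
    have hcomb : α • ((x / c) • e0) + β • ((y / c) • e0) = ((α * x + β * y) / c) • e0 := by
      rw [smul_smul, smul_smul, ← add_smul]
      congr 1
      field_simp
    have hzA : A (α * x + β * y) = Φ (((α * x + β * y) / c) • e0) := by
      rw [hPhiA, hsupp_ray _ (add_nonneg (mul_nonneg hα hx) (mul_nonneg hβ hy))]
    rw [hzA, hxA, hyA, ← hcomb]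
    exact hΦ.convex _ _ α β hα hβ hαβ
  -- left continuity of A
  have hAlc : ∀ t : ℝ, 0 < t → Tendsto A (𝓝[<] t) (𝓝 (A t)) := by
    intro t ht
    have hkey : sSup (A '' Iio t) = A t := by
      apply le_antisymm
      · exact sSup_le (by rintro x ⟨t', ht', rfl⟩; exact hAmono ht'.le)
      · set S := sSup (A '' Iio t) with hS
        refine ENNReal.le_of_forall_pos_le_add fun ε hε hStop => ?_
        have hεR : (0 : ℝ) < ε := hε
        set σ0 : ℝ := S.toReal + ε with hσ0
        have hσ0pos : 0 < σ0 := by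
          have := ENNReal.toReal_nonneg (a := S); rw [hσ0]; linarith
        have hta : t ≤ a σ0 := by
          refine le_of_forall_lt fun t' ht' => ?_
          have hmid : (t' + t) / 2 < t := by linarith
          have h1 : A ((t' + t) / 2) ≤ S := le_sSup ⟨(t' + t) / 2, hmid, rfl⟩
          have h2 : S < ENNReal.ofReal σ0 := by
            rw [hσ0, ENNReal.ofReal_add ENNReal.toReal_nonneg hεR.le,
              ENNReal.ofReal_toReal hStop.ne]
            exact ENNReal.lt_add_right hStop.ne (ENNReal.ofReal_pos.2 hεR).ne'
          obtain ⟨σ, hσpos, hσa, hσlt⟩ := hAlt _ _ (h1.trans_lt h2)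
          have hσle : σ ≤ σ0 := ((ENNReal.ofReal_lt_ofReal_iff hσ0pos).1 hσlt).le
          have h3 : (t' + t) / 2 ≤ a σ0 :=
            hσa.trans (ha (mem_Ioi.2 hσpos) (mem_Ioi.2 hσ0pos) hσle)
          linarith
        calc A t ≤ ENNReal.ofReal σ0 := hAle t σ0 hσ0pos hta
          _ = S + ENNReal.ofReal ε := by
              rw [hσ0, ENNReal.ofReal_add ENNReal.toReal_nonneg hεR.le,
                ENNReal.ofReal_toReal hStop.ne]
          _ = S + ε := by rw [ENNReal.ofReal_coe_nnreal]
    have := hAmono.tendsto_nhdsLT t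
    rwa [hkey] at this
  -- nonconstancy of A
  have hAa1 : A (a 1) ≤ 1 := by
    have := hAle (a 1) 1 one_pos le_rfl
    rwa [ENNReal.ofReal_one] at this
  have hAnonconst : ∃ s t : ℝ, 0 < s ∧ 0 < t ∧ A s ≠ A t := by
    have hseq : Tendsto (fun k : ℕ => (k : ℝ) • e0) atTop (Bornology.cobounded (Euc n)) := by
      rw [← tendsto_norm_atTop_iff_cobounded]
      have h1 : Tendsto (fun k : ℕ => (k : ℝ) * ‖e0‖) atTop atTop :=
        Tendsto.atTop_mul_const (norm_pos_iff.2 he0) tendsto_natCast_atTop_atTop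
      refine h1.congr fun k => ?_
      rw [norm_smul, Real.norm_eq_abs, abs_of_nonneg (Nat.cast_nonneg k)]
    have hev : ∀ᶠ k : ℕ in atTop, 1 < Φ ((k : ℝ) • e0) :=
      (hΦ.coercive.comp hseq).eventually (lt_mem_nhds (by simp : (1 : ℝ≥0∞) < ⊤))
    obtain ⟨k, hk1, hkΦ⟩ := ((eventually_ge_atTop 1).and hev).exists
    have hkpos : (0 : ℝ) < k := by exact_mod_cast hk1
    have hsk : suppFnR L ((k : ℝ) • e0) = k * c := st7_suppFn_smul hLc hne (Nat.cast_nonneg k) e0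
    have hAt : 1 < A ((k : ℝ) * c) := by rw [← hsk, ← hPhiA]; exact hkΦ
    exact ⟨(k : ℝ) * c, a 1, mul_pos hkpos hc, hapos' 1 one_pos,
      ne_of_gt (lt_of_le_of_lt hAa1 hAt)⟩
  -- the conjugate identity
  have hyconj : ∀ ξ : Euc n, yconj Φ ξ = yconj1 A (gauge L ξ) := by
    intro ξ
    obtain ⟨η₀, hη₀supp, hη₀inner⟩ := st7_dual_attain hL h0L ξ
    apply le_antisymm
    · refine iSup_le fun η => ?_
      have h1 : ⟪ξ, η⟫ ≤ suppFnR L η * gauge L ξ :=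
        (st7_inner_le hL h0L ξ η).trans_eq (mul_comm _ _)
      refine le_trans ?_
        (le_iSup_of_le (suppFnR L η) (le_iSup_of_le (st7_suppFn_nonneg hLc h0mem η) le_rfl))
      rw [hPhiA η]
      exact tsub_le_tsub_right (ENNReal.ofReal_le_ofReal h1) _
    · refine iSup_le fun σ => iSup_le fun hσ => ?_
      refine le_trans ?_ (le_iSup _ (σ • η₀))
      have h2 : ⟪ξ, σ • η₀⟫ = σ * gauge L ξ := by rw [real_inner_smul_right, hη₀inner]
      have h3 : Φ (σ • η₀) ≤ A σ := by
        rw [hPhiA, st7_suppFn_smul hLc hne hσ]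
        exact hAmono (by nlinarith)
      rw [h2]
      exact tsub_le_tsub_left h3 _
  refine ⟨A, ⟨hA0, hAconv, hAlc, hAnonconst⟩, hPhiA, hyconj, ?_, ?_⟩
  · -- statement (3)
    intro s hs ξ
    have hset_ne : (0 : ℝ) ∈ {t : ℝ | 0 ≤ t ∧ A t ≤ ENNReal.ofReal s} :=
      ⟨le_rfl, by rw [hA0]; exact zero_le⟩
    have hbdd : BddAbove {t : ℝ | 0 ≤ t ∧ A t ≤ ENNReal.ofReal s} := by
      refine ⟨a (s + 1), fun t ht => ?_⟩
      have h1 : A t < ENNReal.ofReal (s + 1) :=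
        lt_of_le_of_lt ht.2 ((ENNReal.ofReal_lt_ofReal_iff (by linarith)).2 (by linarith))
      obtain ⟨σ, hσ0, hσa, hσlt⟩ := hAlt t _ h1
      have hσle : σ ≤ s + 1 := ((ENNReal.ofReal_lt_ofReal_iff (by linarith)).1 hσlt).le
      exact hσa.trans (ha (mem_Ioi.2 hσ0) (mem_Ioi.2 (by linarith)) hσle)
    have hr0 : 0 ≤ rinv A (ENNReal.ofReal s) := le_csSup hbdd hset_ne
    have hAr : A (rinv A (ENNReal.ofReal s)) ≤ ENNReal.ofReal s := by
      refine ENNReal.le_of_forall_pos_le_add fun ε hε _ => ?_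
      have hεR : (0 : ℝ) < ε := hε
      have hra : rinv A (ENNReal.ofReal s) ≤ a (s + ε) := by
        refine csSup_le ⟨0, hset_ne⟩ fun t ht => ?_
        have h1 : A t < ENNReal.ofReal (s + ε) :=
          lt_of_le_of_lt ht.2 ((ENNReal.ofReal_lt_ofReal_iff (by linarith)).2 (by linarith))
        obtain ⟨σ, hσ0, hσa, hσlt⟩ := hAlt t _ h1
        have hσle : σ ≤ s + ε := ((ENNReal.ofReal_lt_ofReal_iff (by linarith)).1 hσlt).le
        exact hσa.trans (ha (mem_Ioi.2 hσ0) (mem_Ioi.2 (by linarith)) hσle)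
      calc A (rinv A (ENNReal.ofReal s)) ≤ ENNReal.ofReal (s + ε) :=
            hAle _ _ (by linarith) hra
        _ = ENNReal.ofReal s + ENNReal.ofReal ε := ENNReal.ofReal_add hs hεR.le
        _ = ENNReal.ofReal s + ε := by rw [ENNReal.ofReal_coe_nnreal]
    have hiff : ∀ t : ℝ, 0 ≤ t → (A t ≤ ENNReal.ofReal s ↔ t ≤ rinv A (ENNReal.ofReal s)) :=
      fun t ht => ⟨fun h => le_csSup hbdd ⟨ht, h⟩, fun h => (hAmono h).trans hAr⟩
    have hseteq : {η : Euc n | Φ η ≤ ENNReal.ofReal s}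
        = {η : Euc n | suppFnR L η ≤ rinv A (ENNReal.ofReal s)} := by
      ext η
      rw [mem_setOf_eq, mem_setOf_eq, hPhiA η, hiff _ (st7_suppFn_nonneg hLc h0mem η)]
    rw [hseteq]
    obtain ⟨η₀, hη₀supp, hη₀inner⟩ := st7_dual_attain hL h0L ξ
    have hIG2 : IsGreatest
        ((fun η => ⟪ξ, η⟫) '' {η : Euc n | suppFnR L η ≤ rinv A (ENNReal.ofReal s)})
        (rinv A (ENNReal.ofReal s) * gauge L ξ) := by
      constructor
      · refine ⟨rinv A (ENNReal.ofReal s) • η₀, ?_, ?_⟩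
        · rw [mem_setOf_eq, st7_suppFn_smul hLc hne hr0]
          calc rinv A (ENNReal.ofReal s) * suppFnR L η₀
              ≤ rinv A (ENNReal.ofReal s) * 1 := mul_le_mul_of_nonneg_left hη₀supp hr0
            _ = rinv A (ENNReal.ofReal s) := mul_one _
        · simp only [real_inner_smul_right]; rw [hη₀inner]
      · rintro z ⟨η, hη, rfl⟩
        calc ⟪ξ, η⟫ ≤ gauge L ξ * suppFnR L η := st7_inner_le hL h0L ξ η
          _ ≤ gauge L ξ * rinv A (ENNReal.ofReal s) :=
              mul_le_mul_of_nonneg_left hη (gauge_nonneg _)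
          _ = rinv A (ENNReal.ofReal s) * gauge L ξ := mul_comm _ _
    exact hIG2.csSup_eq
  · -- statement (4)
    intro s hs ξ
    have hBmono : Monotone (yconj1 A) := by
      intro t t' h
      refine iSup_le fun σ => iSup_le fun hσ => ?_
      refine le_iSup_of_le σ (le_iSup_of_le hσ ?_)
      exact tsub_le_tsub_right (ENNReal.ofReal_le_ofReal (by nlinarith)) _
    have hB0 : yconj1 A 0 = 0 := by
      refine le_antisymm (iSup_le fun σ => iSup_le fun hσ => ?_) zero_le
      simp [mul_zero, zero_tsub]
    have ha1 := hapos' 1 one_pos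
    have hBlb : ∀ t : ℝ, ENNReal.ofReal (a 1 * t) - 1 ≤ yconj1 A t := by
      intro t
      refine le_iSup_of_le (a 1) (le_iSup_of_le ha1.le ?_)
      exact tsub_le_tsub_left hAa1 _
    have hBbdd : BddAbove {t : ℝ | 0 ≤ t ∧ yconj1 A t ≤ ENNReal.ofReal s} := by
      refine ⟨(s + 1) / a 1, fun t ht => ?_⟩
      have h1 : ENNReal.ofReal (a 1 * t) - 1 ≤ ENNReal.ofReal s := (hBlb t).trans ht.2
      have h2 : ENNReal.ofReal (a 1 * t) ≤ ENNReal.ofReal s + 1 := tsub_le_iff_right.1 h1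
      rw [← ENNReal.ofReal_one, ← ENNReal.ofReal_add hs zero_le_one] at h2
      have h3 : a 1 * t ≤ s + 1 := (ENNReal.ofReal_le_ofReal_iff (by linarith)).1 h2
      rw [le_div_iff₀ ha1]
      linarith
    have hρmem : (0 : ℝ) ∈ {t : ℝ | 0 ≤ t ∧ yconj1 A t ≤ ENNReal.ofReal s} :=
      ⟨le_rfl, by rw [hB0]; exact zero_le⟩
    have hρ0 : 0 ≤ rinv (yconj1 A) (ENNReal.ofReal s) := le_csSup hBbdd hρmem
    have hBρ : yconj1 A (rinv (yconj1 A) (ENNReal.ofReal s)) ≤ ENNReal.ofReal s := by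
      refine iSup_le fun σ => iSup_le fun hσ => ?_
      rcases eq_or_ne (A σ) ⊤ with hAσ | hAσ
      · rw [hAσ]; simp
      rcases eq_or_lt_of_le hσ with hσ0 | hσpos
      · rw [← hσ0]; simp
      · have hm0 : 0 ≤ (A σ).toReal := ENNReal.toReal_nonneg
        have hub : rinv (yconj1 A) (ENNReal.ofReal s) ≤ (s + (A σ).toReal) / σ := by
          refine csSup_le ⟨0, hρmem⟩ fun t ht => ?_
          have h1 : ENNReal.ofReal (σ * t) - A σ ≤ ENNReal.ofReal s :=
            le_trans (le_iSup₂_of_le σ hσ le_rfl) ht.2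
          have h2 : ENNReal.ofReal (σ * t) ≤ ENNReal.ofReal s + A σ := tsub_le_iff_right.1 h1
          rw [← ENNReal.ofReal_toReal hAσ, ← ENNReal.ofReal_add hs hm0] at h2
          have h3 : σ * t ≤ s + (A σ).toReal :=
            (ENNReal.ofReal_le_ofReal_iff (by linarith)).1 h2
          rw [le_div_iff₀ hσpos]
          linarith
        have h4 : σ * rinv (yconj1 A) (ENNReal.ofReal s) ≤ s + (A σ).toReal := by
          have h5 := mul_le_mul_of_nonneg_left hub hσ
          rwa [mul_div_cancel₀ _ hσpos.ne'] at h5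
        calc ENNReal.ofReal (σ * rinv (yconj1 A) (ENNReal.ofReal s)) - A σ
            ≤ ENNReal.ofReal (s + (A σ).toReal) - A σ :=
              tsub_le_tsub_right (ENNReal.ofReal_le_ofReal h4) _
          _ = ENNReal.ofReal s + A σ - A σ := by
              rw [ENNReal.ofReal_add hs hm0, ENNReal.ofReal_toReal hAσ]
          _ ≤ ENNReal.ofReal s := by rw [ENNReal.add_sub_cancel_right hAσ]
    have hiffB : ∀ t : ℝ, 0 ≤ t →
        (yconj1 A t ≤ ENNReal.ofReal s ↔ t ≤ rinv (yconj1 A) (ENNReal.ofReal s)) :=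
      fun t ht => ⟨fun h => le_csSup hBbdd ⟨ht, h⟩, fun h => (hBmono h).trans hBρ⟩
    have hseteqB : {η : Euc n | yconj Φ η ≤ ENNReal.ofReal s}
        = {η : Euc n | gauge L η ≤ rinv (yconj1 A) (ENNReal.ofReal s)} := by
      ext η
      rw [mem_setOf_eq, mem_setOf_eq, hyconj η, hiffB _ (gauge_nonneg _)]
    rw [hseteqB]
    obtain ⟨⟨y0, hy0L, hy0val⟩, _⟩ := st7_suppFn_isGreatest hLc hne ξ
    have hIG3 : IsGreatest
        ((fun η => ⟪ξ, η⟫) '' {η : Euc n | gauge L η ≤ rinv (yconj1 A) (ENNReal.ofReal s)})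
        (rinv (yconj1 A) (ENNReal.ofReal s) * suppFnR L ξ) := by
      constructor
      · refine ⟨rinv (yconj1 A) (ENNReal.ofReal s) • y0, ?_, ?_⟩
        · rw [mem_setOf_eq, gauge_smul_of_nonneg hρ0, smul_eq_mul]
          exact mul_le_of_le_one_right hρ0 (gauge_le_one_of_mem hy0L)
        · simp only [real_inner_smul_right]
          rw [← hy0val]
      · rintro z ⟨η, hη, rfl⟩
        calc ⟪ξ, η⟫ = ⟪η, ξ⟫ := real_inner_comm _ _
          _ ≤ gauge L η * suppFnR L ξ := st7_inner_le hL h0L η ξ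
          _ ≤ rinv (yconj1 A) (ENNReal.ofReal s) * suppFnR L ξ :=
              mul_le_mul_of_nonneg_right hη (st7_suppFn_nonneg hLc h0mem ξ)
    exact hIG3.csSup_eq


end
end

section
/- Let K ⊂ ℝⁿ be a convex body with 0 in its interior and let Φ be an n-dimensional Young function such that Φ(ξ) > 0 for every ξ ≠ 0. Then Φ_•(ξ)/|ξ| → 0 as |ξ| → 0, and Φ_{•K}(ξ)/|ξ| → 0 as |ξ| → 0. -/
open MeasureTheory Filter Set
open scoped ENNReal NNReal Topology Pointwise symmDiff RealInnerProductSpace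

noncomputable section

-- key lemma A
theorem keyA {n : ℕ} (Φ : Euc n → ℝ≥0∞) (hΦ : IsNYoung Φ)
    (hΦpos : ∀ ξ : Euc n, ξ ≠ 0 → 0 < Φ ξ) (ε : ℝ) (hε : 0 < ε) :
    ∃ δ > 0, ∀ ξ : Euc n, ‖ξ‖ ≤ δ → yconj Φ ξ ≤ ENNReal.ofReal (ε * ‖ξ‖) := by
  -- positive lower bound on the sphere of radius ε
  obtain ⟨r, hr0, hrΦ⟩ : ∃ r : ℝ, 0 < r ∧ ∀ η : Euc n, ‖η‖ = ε → ENNReal.ofReal r ≤ Φ η := by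
    set U : ℕ → Set (Euc n) := fun k => Φ ⁻¹' Ioi (ENNReal.ofReal (1 / (k + 1))) with hU
    have hUopen : ∀ k, IsOpen (U k) := fun k => hΦ.lsc.isOpen_preimage _
    have hcov : Metric.sphere (0 : Euc n) ε ⊆ ⋃ k, U k := by
      intro η hη
      rw [mem_sphere_zero_iff_norm] at hη
      have hη0 : η ≠ 0 := by
        intro h; rw [h, norm_zero] at hη; exact hε.ne' hη.symm
      have hpos := hΦpos η hη0
      obtain ⟨k, hk⟩ : ∃ k : ℕ, ENNReal.ofReal (1 / (k + 1)) < Φ η := by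
        rcases eq_or_ne (Φ η) ⊤ with h | h
        · exact ⟨0, by simp [h]⟩
        · obtain ⟨k, hk⟩ := exists_nat_gt (1 / (Φ η).toReal)
          refine ⟨k, ?_⟩
          have h1 : (1 : ℝ) / (k + 1) < (Φ η).toReal := by
            rw [div_lt_iff₀ (by positivity)]
            have h2 : 0 < (Φ η).toReal := ENNReal.toReal_pos hpos.ne' h
            nlinarith [(div_lt_iff₀ h2).mp hk]
          calc ENNReal.ofReal (1 / (k + 1)) < ENNReal.ofReal (Φ η).toReal :=
                ENNReal.ofReal_lt_ofReal_iff (ENNReal.toReal_pos hpos.ne' h) |>.2 h1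
            _ = Φ η := ENNReal.ofReal_toReal h
      exact mem_iUnion.2 ⟨k, hk⟩
    obtain ⟨t, ht⟩ := (isCompact_sphere (0 : Euc n) ε).elim_finite_subcover U hUopen hcov
    set N : ℕ := t.sup id with hN
    refine ⟨1 / (N + 1), by positivity, fun η hη => ?_⟩
    have hmem := ht (mem_sphere_zero_iff_norm.2 hη)
    simp only [mem_iUnion, exists_prop] at hmem
    obtain ⟨k, hkt, hk⟩ := hmem
    rw [hU, mem_preimage, mem_Ioi] at hk
    have hkN : (k : ℝ) ≤ N := Nat.cast_le.2 (Finset.le_sup (f := id) hkt)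
    have hle : (1 : ℝ) / (N + 1) ≤ 1 / (k + 1) := by
      apply one_div_le_one_div_of_le (by positivity)
      linarith
    exact (ENNReal.ofReal_le_ofReal hle).trans hk.le
  -- lower bound for Φ outside the ball of radius ε
  have hgrow : ∀ η : Euc n, ε ≤ ‖η‖ → ENNReal.ofReal (r * ‖η‖ / ε) ≤ Φ η := by
    intro η hη
    have hη0 : 0 < ‖η‖ := hε.trans_le hη
    set a : ℝ := ε / ‖η‖ with ha
    have ha0 : 0 < a := by positivity
    have ha1 : a ≤ 1 := by rw [ha, div_le_one hη0]; exact hη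
    have hnorm : ‖a • η‖ = ε := by
      rw [norm_smul, Real.norm_eq_abs, abs_of_pos ha0, ha, div_mul_cancel₀]
      exact hη0.ne'
    have hc := hΦ.convex η 0 a (1 - a) ha0.le (by linarith) (by ring)
    rw [smul_zero, add_zero, hΦ.map_zero, mul_zero, add_zero] at hc
    have h1 : ENNReal.ofReal r ≤ ENNReal.ofReal a * Φ η := (hrΦ _ hnorm).trans hc
    have h2 : ENNReal.ofReal a * ENNReal.ofReal (r * ‖η‖ / ε) = ENNReal.ofReal r := by
      rw [← ENNReal.ofReal_mul ha0.le]
      congr 1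
      rw [ha]
      field_simp
    rw [← h2] at h1
    exact (ENNReal.mul_le_mul_iff_right (by simp [ha0, ENNReal.ofReal_pos.2 ha0] : ENNReal.ofReal a ≠ 0)
      ENNReal.ofReal_ne_top).1 h1
  refine ⟨r / ε, by positivity, fun ξ hξ => ?_⟩
  refine iSup_le fun η => ?_
  rcases le_or_gt ‖η‖ ε with hle | hlt
  · refine (tsub_le_self).trans (ENNReal.ofReal_le_ofReal ?_)
    calc ⟪ξ, η⟫ ≤ ‖ξ‖ * ‖η‖ := real_inner_le_norm ξ η
      _ ≤ ‖ξ‖ * ε := by gcongr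
      _ = ε * ‖ξ‖ := mul_comm _ _
  · have : ENNReal.ofReal ⟪ξ, η⟫ ≤ Φ η := by
      refine le_trans ?_ (hgrow η hlt.le)
      apply ENNReal.ofReal_le_ofReal
      calc ⟪ξ, η⟫ ≤ ‖ξ‖ * ‖η‖ := real_inner_le_norm ξ η
        _ ≤ (r / ε) * ‖η‖ := by gcongr
        _ = r * ‖η‖ / ε := by ring
    rw [tsub_eq_zero_of_le this]
    exact zero_le


theorem existsReal {ε : ℝ≥0∞} (hε : 0 < ε) : ∃ e : ℝ, 0 < e ∧ ENNReal.ofReal e ≤ ε := by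
  rcases eq_or_ne ε ⊤ with h | h
  · exact ⟨1, one_pos, by simp [h]⟩
  · exact ⟨ε.toReal, ENNReal.toReal_pos hε.ne' h, by rw [ENNReal.ofReal_toReal h]⟩

theorem keyB {n : ℕ} (hn : 1 ≤ n) (K : Set (Euc n)) (hK : IsConvexBody K)
    (h0K : (0 : Euc n) ∈ interior K)
    (Φ : Euc n → ℝ≥0∞) (hΦ : IsNYoung Φ)
    (hΦpos : ∀ ξ : Euc n, ξ ≠ 0 → 0 < Φ ξ) :
    ∃ C : ℝ, 1 ≤ C ∧ ∀ ε : ℝ, 0 < ε → ∃ δ > 0, ∀ ξ : Euc n, ‖ξ‖ ≤ δ →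
      youngSymm K (yconj Φ) ξ ≤ ENNReal.ofReal (ε * C * ‖ξ‖) := by
  haveI : Nontrivial (Euc n) :=
    Module.nontrivial_of_finrank_pos (R := ℝ) (M := Euc n)
      (by rw [finrank_euclideanSpace_fin]; omega)
  obtain ⟨ρ, hρ, hballK⟩ := Metric.mem_nhds_iff.1 (mem_interior_iff_mem_nhds.1 h0K)
  have hgauge : ∀ x : Euc n, gauge K x ≤ ‖x‖ / ρ := by
    intro x
    have := gauge_mono (absorbent_ball_zero hρ) hballK x
    rwa [gauge_ball hρ.le] at this
  set b : ℝ := (volume (Metric.ball (0 : Euc n) 1)).toReal with hbdef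
  have hbfin : volume (Metric.ball (0 : Euc n) 1) ≠ ⊤ := measure_ball_lt_top.ne
  have hb : 0 < b := ENNReal.toReal_pos (Metric.measure_ball_pos volume _ one_pos).ne' hbfin
  set VK : ℝ := (volume K).toReal with hVKdef
  have hKfin : volume K ≠ ⊤ := hK.1.measure_lt_top.ne
  set C : ℝ := max 1 (VK / (b * ρ ^ n)) with hCdef
  have hC1 : (1 : ℝ) ≤ C := le_max_left _ _
  have hC0 : (0 : ℝ) < C := lt_of_lt_of_le one_pos hC1
  have hkeyR : VK ≤ C ^ n * (b * ρ ^ n) := by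
    have h1 : VK / (b * ρ ^ n) ≤ C := le_max_right _ _
    have h2 : C ≤ C ^ n := by
      calc C = C ^ 1 := (pow_one C).symm
        _ ≤ C ^ n := pow_le_pow_right₀ hC1 hn
    have h3 : VK / (b * ρ ^ n) ≤ C ^ n := h1.trans h2
    have hpos : (0 : ℝ) < b * ρ ^ n := by positivity
    calc VK = VK / (b * ρ ^ n) * (b * ρ ^ n) := by field_simp
      _ ≤ C ^ n * (b * ρ ^ n) := mul_le_mul_of_nonneg_right h3 hpos.le
  refine ⟨C, hC1, fun ε hε => ?_⟩
  obtain ⟨δ', hδ', hbd⟩ := keyA Φ hΦ hΦpos ε hε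
  refine ⟨δ' / C, by positivity, fun ξ hξ => ?_⟩
  have hCξδ : C * ‖ξ‖ ≤ δ' := by
    rw [← le_div_iff₀' hC0]
    exact hξ
  -- the candidate level
  have hmem : ENNReal.ofReal (ε * C * ‖ξ‖) ∈
      {t : ℝ≥0∞ | volume K * ENNReal.ofReal (gauge K (-ξ) ^ n) ≤
        volume {η | yconj Φ η ≤ t}} := by
    have hg : gauge K (-ξ) ^ n ≤ (‖ξ‖ / ρ) ^ n := by
      have h := hgauge (-ξ)
      rw [norm_neg] at h
      exact pow_le_pow_left₀ (gauge_nonneg _) h n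
    have hreal : VK * (‖ξ‖ / ρ) ^ n ≤ (C * ‖ξ‖) ^ n * b := by
      have hstep : VK * (‖ξ‖ ^ n / ρ ^ n) ≤ C ^ n * (b * ρ ^ n) * (‖ξ‖ ^ n / ρ ^ n) :=
        mul_le_mul_of_nonneg_right hkeyR (by positivity)
      have heq : C ^ n * (b * ρ ^ n) * (‖ξ‖ ^ n / ρ ^ n) = (C * ‖ξ‖) ^ n * b := by
        rw [mul_pow]
        field_simp
      rw [div_pow]
      rw [heq] at hstep
      exact hstep
    calc volume K * ENNReal.ofReal (gauge K (-ξ) ^ n)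
        ≤ ENNReal.ofReal VK * ENNReal.ofReal ((‖ξ‖ / ρ) ^ n) := by
          rw [hVKdef, ENNReal.ofReal_toReal hKfin]
          exact mul_le_mul_right (ENNReal.ofReal_le_ofReal hg) _
      _ = ENNReal.ofReal (VK * (‖ξ‖ / ρ) ^ n) := by
          rw [ENNReal.ofReal_mul ENNReal.toReal_nonneg]
      _ ≤ ENNReal.ofReal ((C * ‖ξ‖) ^ n * b) := ENNReal.ofReal_le_ofReal hreal
      _ = ENNReal.ofReal ((C * ‖ξ‖) ^ n) * ENNReal.ofReal b := by
          rw [ENNReal.ofReal_mul (by positivity)]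
      _ = ENNReal.ofReal ((C * ‖ξ‖) ^ n) * volume (Metric.ball (0 : Euc n) 1) := by
          rw [hbdef, ENNReal.ofReal_toReal hbfin]
      _ = volume (Metric.ball (0 : Euc n) (C * ‖ξ‖)) := by
          rw [Measure.addHaar_ball (μ := volume) (0 : Euc n) (by positivity : (0:ℝ) ≤ C * ‖ξ‖),
            finrank_euclideanSpace_fin]
      _ ≤ volume {η : Euc n | yconj Φ η ≤ ENNReal.ofReal (ε * C * ‖ξ‖)} := by
          apply measure_mono
          intro η hη
          rw [Metric.mem_ball, dist_zero_right] at hη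
          have h1 : yconj Φ η ≤ ENNReal.ofReal (ε * ‖η‖) :=
            hbd η (hη.le.trans hCξδ)
          refine h1.trans (ENNReal.ofReal_le_ofReal ?_)
          rw [mul_assoc]
          exact mul_le_mul_of_nonneg_left hη.le hε.le
  exact sInf_le hmem

/-- **Lemma (behaviour of `Φ_•` and `Φ_{•K}` near zero).** -/
theorem statement9 {n : ℕ} (hn : 1 ≤ n) (K : Set (Euc n)) (hK : IsConvexBody K)
    (h0K : (0 : Euc n) ∈ interior K)
    (Φ : Euc n → ℝ≥0∞) (hΦ : IsNYoung Φ)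
    (hΦpos : ∀ ξ : Euc n, ξ ≠ 0 → 0 < Φ ξ) :
    Tendsto (fun ξ : Euc n => yconj Φ ξ / ENNReal.ofReal ‖ξ‖) (𝓝[≠] (0 : Euc n)) (𝓝 0) ∧
    Tendsto (fun ξ : Euc n => youngSymm K (yconj Φ) ξ / ENNReal.ofReal ‖ξ‖)
      (𝓝[≠] (0 : Euc n)) (𝓝 0) := by
  obtain ⟨C, hC1, hB⟩ := keyB hn K hK h0K Φ hΦ hΦpos
  have hC0 : (0 : ℝ) < C := lt_of_lt_of_le one_pos hC1
  constructor
  · rw [ENNReal.tendsto_nhds_zero]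
    intro ε hε
    obtain ⟨e, he0, hee⟩ := existsReal hε
    obtain ⟨δ, hδ, hb⟩ := keyA Φ hΦ hΦpos e he0
    have h1 : ∀ᶠ ξ : Euc n in 𝓝 (0 : Euc n), ‖ξ‖ ≤ δ := by
      filter_upwards [Metric.closedBall_mem_nhds (0 : Euc n) hδ] with ξ hξ
      simpa [mem_closedBall_zero_iff] using hξ
    filter_upwards [h1.filter_mono nhdsWithin_le_nhds, self_mem_nhdsWithin] with ξ hξ hξ0
    have hξn : (0 : ℝ) < ‖ξ‖ := norm_pos_iff.2 hξ0
    calc yconj Φ ξ / ENNReal.ofReal ‖ξ‖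
        ≤ ENNReal.ofReal (e * ‖ξ‖) / ENNReal.ofReal ‖ξ‖ :=
          ENNReal.div_le_div_right (hb ξ hξ) _
      _ = ENNReal.ofReal e := by
          rw [ENNReal.ofReal_mul he0.le, mul_div_assoc,
            ENNReal.div_self (ENNReal.ofReal_pos.2 hξn).ne' ENNReal.ofReal_ne_top, mul_one]
      _ ≤ ε := hee
  · rw [ENNReal.tendsto_nhds_zero]
    intro ε hε
    obtain ⟨e, he0, hee⟩ := existsReal hε
    obtain ⟨δ, hδ, hb⟩ := hB (e / C) (by positivity)
    have h1 : ∀ᶠ ξ : Euc n in 𝓝 (0 : Euc n), ‖ξ‖ ≤ δ := by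
      filter_upwards [Metric.closedBall_mem_nhds (0 : Euc n) hδ] with ξ hξ
      simpa [mem_closedBall_zero_iff] using hξ
    filter_upwards [h1.filter_mono nhdsWithin_le_nhds, self_mem_nhdsWithin] with ξ hξ hξ0
    have hξn : (0 : ℝ) < ‖ξ‖ := norm_pos_iff.2 hξ0
    have hb' : youngSymm K (yconj Φ) ξ ≤ ENNReal.ofReal (e * ‖ξ‖) := by
      have := hb ξ hξ
      rwa [div_mul_cancel₀ e hC0.ne'] at this
    calc youngSymm K (yconj Φ) ξ / ENNReal.ofReal ‖ξ‖
        ≤ ENNReal.ofReal (e * ‖ξ‖) / ENNReal.ofReal ‖ξ‖ :=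
          ENNReal.div_le_div_right hb' _
      _ = ENNReal.ofReal e := by
          rw [ENNReal.ofReal_mul he0.le, mul_div_assoc,
            ENNReal.div_self (ENNReal.ofReal_pos.2 hξn).ne' ENNReal.ofReal_ne_top, mul_one]
      _ ≤ ε := hee


end
end

section
/- Let Φ be an n-dimensional Young function, and let s_0 ≥ 0 be such that the set {Φ_• ≤ s_0} has nonempty interior. Let ξ ∈ ℝⁿ \ {0}, and let η ∈ ∂{Φ_• ≤ s_0} (the topological boundary) be such that ξ belongs to the outer normal cone to {Φ_• ≤ s_0} at η. Then the function s ↦ h_{{Φ_• ≤ s}}(ξ) − s attains its maximum over [0,∞) at s_0 if and only if Φ_•(η) = s_0 and ξ ∈ ∂Φ_•(η). -/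
open MeasureTheory Filter Set
open scoped ENNReal NNReal Topology Pointwise symmDiff RealInnerProductSpace

noncomputable section

lemma yconj_zero' {n : ℕ} (Φ : Euc n → ℝ≥0∞) : yconj Φ 0 = 0 := by
  refine le_antisymm (iSup_le fun η => ?_) zero_le
  simp [inner_zero_left, zero_tsub]

lemma yconj_le_iff' {n : ℕ} (Φ : Euc n → ℝ≥0∞) (θ : Euc n) (c : ℝ≥0∞) :
    yconj Φ θ ≤ c ↔ ∀ η, ENNReal.ofReal ⟪θ, η⟫ ≤ c + Φ η := by
  simp [yconj, iSup_le_iff, tsub_le_iff_right]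

lemma isClosed_yconj_sublevel {n : ℕ} (Φ : Euc n → ℝ≥0∞) (c : ℝ≥0∞) :
    IsClosed {θ : Euc n | yconj Φ θ ≤ c} := by
  have h : {θ : Euc n | yconj Φ θ ≤ c}
      = ⋂ η : Euc n, {θ : Euc n | ENNReal.ofReal ⟪θ, η⟫ ≤ c + Φ η} := by
    ext θ; simp [yconj_le_iff']
  rw [h]
  exact isClosed_iInter fun η => isClosed_le
    (ENNReal.continuous_ofReal.comp (continuous_id.inner continuous_const))
    continuous_const

/-- Coercivity in the direction `ξ`: sublevel sets of `yconj Φ` have bounded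
inner product with `ξ`. -/
lemma yconj_sublevel_bound {n : ℕ} (Φ : Euc n → ℝ≥0∞) (hΦ : IsNYoung Φ)
    (ξ : Euc n) (hξ : ξ ≠ 0) (s : ℝ) :
    ∃ M : ℝ, ∀ θ : Euc n, yconj Φ θ ≤ ENNReal.ofReal s → ⟪ξ, θ⟫ ≤ M := by
  obtain ⟨ε, hε, hfin⟩ := hΦ.finite_near_zero
  have hξn : (0 : ℝ) < ‖ξ‖ := norm_pos_iff.mpr hξ
  set c : ℝ := ε / (2 * ‖ξ‖) with hc
  have hcpos : 0 < c := div_pos hε (by positivity)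
  set η₀ : Euc n := c • ξ with hη₀def
  have hη₀ : Φ η₀ ≠ ⊤ := by
    apply hfin
    have hnorm : ‖η₀‖ = c * ‖ξ‖ := by
      rw [hη₀def, norm_smul, Real.norm_of_nonneg hcpos.le]
    rw [hnorm, hc]
    rw [div_mul_eq_mul_div, mul_comm 2 ‖ξ‖, ← div_div, mul_div_assoc,
      div_self hξn.ne', mul_one]
    linarith
  set B : ℝ≥0∞ := ENNReal.ofReal s + Φ η₀ with hBdef
  have hB : B ≠ ⊤ := ENNReal.add_ne_top.mpr ⟨ENNReal.ofReal_ne_top, hη₀⟩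
  refine ⟨max 0 (B.toReal / c), fun θ hθ => ?_⟩
  have h1 : ENNReal.ofReal ⟪θ, η₀⟫ - Φ η₀ ≤ yconj Φ θ :=
    le_iSup (fun η => ENNReal.ofReal ⟪θ, η⟫ - Φ η) η₀
  have h2 : ENNReal.ofReal ⟪θ, η₀⟫ ≤ B := by
    have h := h1.trans hθ
    rw [tsub_le_iff_right] at h
    exact h
  have h3 : ⟪θ, η₀⟫ = c * ⟪ξ, θ⟫ := by
    rw [hη₀def, real_inner_smul_right, real_inner_comm]
  by_cases hpos : ⟪ξ, θ⟫ ≤ 0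
  · exact hpos.trans (le_max_left _ _)
  · push_neg at hpos
    have h4 : c * ⟪ξ, θ⟫ ≤ B.toReal := by
      rw [h3] at h2
      exact (ENNReal.ofReal_le_iff_le_toReal hB).mp h2
    have h5 : ⟪ξ, θ⟫ ≤ B.toReal / c := (le_div_iff₀' hcpos).mpr h4
    exact h5.trans (le_max_right _ _)

/-- **Lemma (maximizers of `s ↦ h_{{Φ_• ≤ s}}(ξ) − s`).** -/
theorem statement13 {n : ℕ} (hn : 1 ≤ n)
    (Φ : Euc n → ℝ≥0∞) (hΦ : IsNYoung Φ)
    (s₀ : ℝ) (hs₀ : 0 ≤ s₀)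
    (hint : (interior {θ : Euc n | yconj Φ θ ≤ ENNReal.ofReal s₀}).Nonempty)
    (ξ : Euc n) (hξ : ξ ≠ 0)
    (η : Euc n) (hη : η ∈ frontier {θ : Euc n | yconj Φ θ ≤ ENNReal.ofReal s₀})
    (hcone : ∀ θ ∈ {θ : Euc n | yconj Φ θ ≤ ENNReal.ofReal s₀}, ⟪ξ, θ - η⟫ ≤ (0 : ℝ)) :
    (∀ s : ℝ, 0 ≤ s →
        suppFnR {θ : Euc n | yconj Φ θ ≤ ENNReal.ofReal s} ξ - s ≤
        suppFnR {θ : Euc n | yconj Φ θ ≤ ENNReal.ofReal s₀} ξ - s₀) ↔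
      (yconj Φ η = ENNReal.ofReal s₀ ∧ ξ ∈ subgrad (yconj Φ) η) := by
  have hηK : η ∈ {θ : Euc n | yconj Φ θ ≤ ENNReal.ofReal s₀} :=
    (isClosed_yconj_sublevel Φ _).frontier_subset hη
  have himg : BddAbove ((fun θ => ⟪ξ, θ⟫) ''
      {θ : Euc n | yconj Φ θ ≤ ENNReal.ofReal s₀}) := by
    refine ⟨⟪ξ, η⟫, ?_⟩
    rintro _ ⟨θ, hθ, rfl⟩
    have h := hcone θ hθ
    rw [inner_sub_right] at h
    linarith
  have hsupp₀ : suppFnR {θ : Euc n | yconj Φ θ ≤ ENNReal.ofReal s₀} ξ = ⟪ξ, η⟫ := by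
    refine le_antisymm (csSup_le ⟨_, ⟨η, hηK, rfl⟩⟩ ?_) (le_csSup himg ⟨η, hηK, rfl⟩)
    rintro _ ⟨θ, hθ, rfl⟩
    have h := hcone θ hθ
    rw [inner_sub_right] at h
    linarith
  constructor
  · intro hmax
    have hΨη : yconj Φ η = ENNReal.ofReal s₀ := by
      have hle : yconj Φ η ≤ ENNReal.ofReal s₀ := hηK
      rcases eq_or_lt_of_le hle with heq | hlt
      · exact heq
      exfalso
      have hne : yconj Φ η ≠ ⊤ := (hlt.trans_le le_top).ne
      set s₁ : ℝ := (yconj Φ η).toReal with hs₁def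
      have h1 : yconj Φ η ≤ ENNReal.ofReal s₁ := by
        rw [hs₁def, ENNReal.ofReal_toReal hne]
      have hs₁0 : 0 ≤ s₁ := ENNReal.toReal_nonneg
      have hs₁lt : s₁ < s₀ := by
        have h2 : (yconj Φ η).toReal < (ENNReal.ofReal s₀).toReal :=
          (ENNReal.toReal_lt_toReal hne ENNReal.ofReal_ne_top).mpr hlt
        rwa [ENNReal.toReal_ofReal hs₀] at h2
      obtain ⟨M, hM⟩ := yconj_sublevel_bound Φ hΦ ξ hξ s₁
      have hbdd : BddAbove ((fun θ => ⟪ξ, θ⟫) ''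
          {θ : Euc n | yconj Φ θ ≤ ENNReal.ofReal s₁}) := by
        refine ⟨M, ?_⟩; rintro _ ⟨θ, hθ, rfl⟩; exact hM θ hθ
      have h3 : ⟪ξ, η⟫ ≤ suppFnR {θ : Euc n | yconj Φ θ ≤ ENNReal.ofReal s₁} ξ :=
        le_csSup hbdd ⟨η, h1, rfl⟩
      have h4 := hmax s₁ hs₁0
      rw [hsupp₀] at h4
      linarith
    refine ⟨hΨη, fun θ => ?_⟩
    by_cases hθtop : yconj Φ θ = ⊤
    · rw [hθtop]; simp
    set s : ℝ := (yconj Φ θ).toReal with hsdef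
    have hs0 : 0 ≤ s := ENNReal.toReal_nonneg
    have hθval : yconj Φ θ = ENNReal.ofReal s := by
      rw [hsdef, ENNReal.ofReal_toReal hθtop]
    have hθK : θ ∈ {θ' : Euc n | yconj Φ θ' ≤ ENNReal.ofReal s} := le_of_eq hθval
    obtain ⟨M, hM⟩ := yconj_sublevel_bound Φ hΦ ξ hξ s
    have hbdd : BddAbove ((fun θ' => ⟪ξ, θ'⟫) ''
        {θ' : Euc n | yconj Φ θ' ≤ ENNReal.ofReal s}) := by
      refine ⟨M, ?_⟩; rintro _ ⟨θ', hθ', rfl⟩; exact hM θ' hθ'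
    have h2 : ⟪ξ, θ⟫ ≤ suppFnR {θ' : Euc n | yconj Φ θ' ≤ ENNReal.ofReal s} ξ :=
      le_csSup hbdd ⟨θ, hθK, rfl⟩
    have h3 := hmax s hs0
    rw [hsupp₀] at h3
    rw [hΨη, hθval, EReal.coe_ennreal_ofReal, EReal.coe_ennreal_ofReal,
      max_eq_left hs₀, max_eq_left hs0, ← EReal.coe_add, EReal.coe_le_coe_iff,
      inner_sub_right]
    linarith
  · rintro ⟨hΨη, hsub⟩ s hs
    have hξη : s₀ ≤ ⟪ξ, η⟫ := by
      have h := hsub 0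
      rw [hΨη, yconj_zero'] at h
      rw [zero_sub, inner_neg_right, EReal.coe_ennreal_ofReal, max_eq_left hs₀,
        EReal.coe_ennreal_zero, ← EReal.coe_add] at h
      have h' : s₀ + -⟪ξ, η⟫ ≤ (0 : ℝ) := by exact_mod_cast h
      linarith
    rw [hsupp₀]
    have hkey : suppFnR {θ : Euc n | yconj Φ θ ≤ ENNReal.ofReal s} ξ
        ≤ ⟪ξ, η⟫ + (s - s₀) := by
      refine Real.sSup_le ?_ (by linarith)
      rintro _ ⟨θ, hθ, rfl⟩
      have h := hsub θ
      rw [hΨη] at h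
      have h2 : ((yconj Φ θ : ℝ≥0∞) : EReal) ≤ ((ENNReal.ofReal s : ℝ≥0∞) : EReal) :=
        EReal.coe_ennreal_le_coe_ennreal_iff.mpr hθ
      have h3 := h.trans h2
      rw [EReal.coe_ennreal_ofReal, EReal.coe_ennreal_ofReal, max_eq_left hs₀,
        max_eq_left hs, ← EReal.coe_add, EReal.coe_le_coe_iff, inner_sub_right] at h3
      linarith
    linarith

end
end

section
/- Let K ⊂ ℝⁿ be a convex body with 0 in its interior and let Φ be an n-dimensional Young function with 0 < Φ(x) < ∞ for every x ≠ 0. Given ξ ∈ ℝⁿ \ {0}, define φ : [0,∞) → ℝ by φ(s) = h_{{Φ_{•K} ≤ s}}(ξ) − s. Then φ attains its maximum over [0,∞). Moreover, if this maximum is attained at s = 0, then φ(0) > 0, the set {Φ_{•K} ≤ 0} has nonempty interior, and the set {Φ_• ≤ 0} has nonempty interior. -/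
open MeasureTheory Filter Set
open scoped ENNReal NNReal Topology Pointwise symmDiff RealInnerProductSpace

noncomputable section

section AuxLemmas

variable {n : ℕ} {Φ : Euc n → ℝ≥0∞} {K : Set (Euc n)}

private lemma aux_convexOn (hconv : ConvexOnE Φ) (hfin : ∀ x, Φ x ≠ ⊤) :
    ConvexOn ℝ (univ : Set (Euc n)) (fun x => (Φ x).toReal) := by
  refine ⟨convex_univ, fun x _ y _ a b ha hb hab => ?_⟩
  have h := hconv x y a b ha hb hab
  have hne : ENNReal.ofReal a * Φ x + ENNReal.ofReal b * Φ y ≠ ⊤ := by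
    simp [ENNReal.add_ne_top, ENNReal.mul_ne_top, ENNReal.ofReal_ne_top, hfin x, hfin y]
  calc (Φ (a • x + b • y)).toReal
      ≤ (ENNReal.ofReal a * Φ x + ENNReal.ofReal b * Φ y).toReal := ENNReal.toReal_mono hne h
    _ = a * (Φ x).toReal + b * (Φ y).toReal := by
        rw [ENNReal.toReal_add (by simp [ENNReal.mul_ne_top, hfin x])
          (by simp [ENNReal.mul_ne_top, hfin y]), ENNReal.toReal_mul, ENNReal.toReal_mul,
          ENNReal.toReal_ofReal ha, ENNReal.toReal_ofReal hb]

private lemma aux_continuous (hconv : ConvexOnE Φ) (hfin : ∀ x, Φ x ≠ ⊤) :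
    Continuous (fun x => (Φ x).toReal) := by
  rw [← continuousOn_univ]
  exact (aux_convexOn hconv hfin).continuousOn isOpen_univ

private lemma aux_growth (hconv : ConvexOnE Φ) (hfin : ∀ x, Φ x ≠ ⊤) (hzero : Φ 0 = 0)
    {c : ℝ} (hc : 0 < c) {m : ℝ} (hm : ∀ x : Euc n, ‖x‖ = c → m ≤ (Φ x).toReal) :
    ∀ η : Euc n, c ≤ ‖η‖ → m * (‖η‖ / c) ≤ (Φ η).toReal := by
  intro η hη
  have hη0 : 0 < ‖η‖ := lt_of_lt_of_le hc hη
  set a := c / ‖η‖ with ha_def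
  have ha : 0 < a := div_pos hc hη0
  have ha1 : a ≤ 1 := (div_le_one hη0).2 hη
  have hu : ‖a • η‖ = c := by
    rw [norm_smul, Real.norm_eq_abs, abs_of_pos ha, ha_def, div_mul_cancel₀ _ hη0.ne']
  have hconv' := (aux_convexOn hconv hfin).2 (mem_univ η) (mem_univ (0 : Euc n))
    ha.le (by linarith : (0:ℝ) ≤ 1 - a) (by ring)
  simp only [smul_zero, add_zero, smul_eq_mul, hzero, ENNReal.toReal_zero, mul_zero] at hconv'
  have h1 : m ≤ a * (Φ η).toReal := le_trans (hm _ hu) hconv'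
  have hf : 0 ≤ (Φ η).toReal := ENNReal.toReal_nonneg
  rw [ha_def] at h1
  have h2 : m * (‖η‖ / c) ≤ (c / ‖η‖ * (Φ η).toReal) * (‖η‖ / c) :=
    mul_le_mul_of_nonneg_right h1 (by positivity)
  have h3 : (c / ‖η‖ * (Φ η).toReal) * (‖η‖ / c) = (Φ η).toReal := by field_simp
  linarith

private lemma aux_psi_upper (hfin : ∀ x, Φ x ≠ ⊤)
    {c m : ℝ} (hc : 0 < c)
    (hgrow : ∀ η : Euc n, c ≤ ‖η‖ → m * (‖η‖ / c) ≤ (Φ η).toReal)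
    (ξ : Euc n) (hξ : ‖ξ‖ * c ≤ m) :
    yconj Φ ξ ≤ ENNReal.ofReal (c * ‖ξ‖) := by
  refine iSup_le fun η => ?_
  rw [tsub_le_iff_right, ← ENNReal.ofReal_toReal (hfin η),
    ← ENNReal.ofReal_add (by positivity) ENNReal.toReal_nonneg]
  refine ENNReal.ofReal_le_ofReal ?_
  have hi : ⟪ξ, η⟫ ≤ ‖ξ‖ * ‖η‖ := real_inner_le_norm ξ η
  have hf : 0 ≤ (Φ η).toReal := ENNReal.toReal_nonneg
  rcases le_or_gt ‖η‖ c with h | h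
  · nlinarith [norm_nonneg ξ, norm_nonneg η]
  · have hgr := hgrow η h.le
    have hd : 0 < ‖η‖ / c := div_pos (hc.trans h) hc
    have h2 : ‖ξ‖ * c * (‖η‖ / c) ≤ m * (‖η‖ / c) := mul_le_mul_of_nonneg_right hξ hd.le
    have h3 : ‖ξ‖ * c * (‖η‖ / c) = ‖ξ‖ * ‖η‖ := by field_simp
    have h4 : (0:ℝ) ≤ c * ‖ξ‖ := by positivity
    linarith

private lemma aux_psi_sublevel (hfin : ∀ x, Φ x ≠ ⊤)
    {δ C t : ℝ} (hδ : 0 < δ) (hC : 0 ≤ C) (ht : 0 ≤ t)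
    (hCb : ∀ x : Euc n, ‖x‖ = δ → (Φ x).toReal ≤ C) :
    {ξ : Euc n | yconj Φ ξ ≤ ENNReal.ofReal t} ⊆ Metric.closedBall 0 ((t + C) / δ) := by
  intro ξ hξ
  simp only [mem_setOf_eq] at hξ
  rw [Metric.mem_closedBall, dist_zero_right]
  rcases eq_or_ne ξ 0 with rfl | hξ0
  · simp only [norm_zero]; positivity
  · have hξn : 0 < ‖ξ‖ := norm_pos_iff.2 hξ0
    set η := (δ / ‖ξ‖) • ξ with hη_def
    have hηn : ‖η‖ = δ := by
      rw [hη_def, norm_smul, Real.norm_eq_abs, abs_of_pos (div_pos hδ hξn),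
        div_mul_cancel₀ _ hξn.ne']
    have hinner : ⟪ξ, η⟫ = δ * ‖ξ‖ := by
      rw [hη_def, real_inner_smul_right, real_inner_self_eq_norm_sq]
      field_simp
    have hkey : ENNReal.ofReal (δ * ‖ξ‖ - C) ≤ yconj Φ ξ := by
      calc ENNReal.ofReal (δ * ‖ξ‖ - C)
          = ENNReal.ofReal (δ * ‖ξ‖) - ENNReal.ofReal C := ENNReal.ofReal_sub _ hC
        _ ≤ ENNReal.ofReal (δ * ‖ξ‖) - Φ η := by
            refine tsub_le_tsub_left ?_ _
            rw [← ENNReal.ofReal_toReal (hfin η)]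
            exact ENNReal.ofReal_le_ofReal (hCb η hηn)
        _ ≤ yconj Φ ξ := by
            rw [← hinner]
            exact le_iSup (fun η => ENNReal.ofReal ⟪ξ, η⟫ - Φ η) η
    have := (ENNReal.ofReal_le_ofReal_iff ht).1 (hkey.trans hξ)
    rw [le_div_iff₀ hδ]
    linarith

private lemma aux_gauge_le_iff (hKc : IsCompact K) (hKconv : Convex ℝ K)
    (h0K : (0 : Euc n) ∈ interior K) {r : ℝ} (hr : 0 ≤ r) (x : Euc n) :
    gauge K x ≤ r ↔ x ∈ r • K := by
  have hKnhds : K ∈ 𝓝 (0 : Euc n) := mem_interior_iff_mem_nhds.1 h0K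
  rcases hr.eq_or_lt with rfl | hr
  · rw [zero_smul_set ⟨0, mem_of_mem_nhds hKnhds⟩]
    constructor
    · intro h
      have h0 : gauge K x = 0 := le_antisymm h (gauge_nonneg x)
      rw [gauge_eq_zero (absorbent_nhds_zero hKnhds)
        ((NormedSpace.isVonNBounded_iff ℝ).2 hKc.isBounded)] at h0
      simp [h0]
    · intro h; rw [Set.mem_zero] at h; simp [h, gauge_zero]
  · rw [mem_smul_set_iff_inv_smul_mem₀ hr.ne']
    have h1 : gauge K (r⁻¹ • x) = r⁻¹ * gauge K x :=
      gauge_smul_of_nonneg (inv_nonneg.2 hr.le) x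
    constructor
    · intro h
      rw [← hKc.isClosed.closure_eq, ← gauge_le_one_iff_mem_closure hKconv hKnhds, h1]
      calc r⁻¹ * gauge K x ≤ r⁻¹ * r := mul_le_mul_of_nonneg_left h (inv_nonneg.2 hr.le)
        _ = 1 := inv_mul_cancel₀ hr.ne'
    · intro h
      have h2 : gauge K (r⁻¹ • x) ≤ 1 := by
        rw [gauge_le_one_iff_mem_closure hKconv hKnhds]; exact subset_closure h
      rw [h1] at h2
      have h3 := mul_le_mul_of_nonneg_left h2 hr.le
      rwa [← mul_assoc, mul_inv_cancel₀ hr.ne', one_mul, mul_one] at h3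

private lemma aux_suppFn (hKc : IsCompact K) (hKconv : Convex ℝ K)
    (h0K : (0 : Euc n) ∈ interior K) {r : ℝ} (hr : 0 ≤ r) (ξ : Euc n) :
    suppFnR {θ : Euc n | gauge K (-θ) ≤ r} ξ = r * suppFnR K (-ξ) := by
  have hset : {θ : Euc n | gauge K (-θ) ≤ r} = (fun k : Euc n => (-r) • k) '' K := by
    ext θ
    rw [mem_setOf_eq, aux_gauge_le_iff hKc hKconv h0K hr (-θ)]
    constructor
    · rintro ⟨k, hk, hkeq⟩
      refine ⟨k, hk, ?_⟩
      show (-r) • k = θ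
      rw [neg_smul]
      simp only at hkeq
      rw [hkeq, neg_neg]
    · rintro ⟨k, hk, rfl⟩
      refine ⟨k, hk, ?_⟩
      show r • k = -((-r) • k)
      rw [neg_smul, neg_neg]
  rw [suppFnR, hset, Set.image_image]
  have heq : (fun k : Euc n => ⟪ξ, (-r) • k⟫) = fun k => r * ⟪-ξ, k⟫ := funext fun k => by
    rw [real_inner_smul_right, inner_neg_left]; ring
  rw [heq, ← Set.image_image (fun y : ℝ => r * y) (fun k : Euc n => ⟪-ξ, k⟫)]
  have him : (fun y : ℝ => r * y) '' ((fun k : Euc n => ⟪-ξ, k⟫) '' K)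
      = r • ((fun k : Euc n => ⟪-ξ, k⟫) '' K) := by
    ext y; simp [Set.mem_smul_set, smul_eq_mul]
  rw [him, Real.sSup_smul_of_nonneg hr, smul_eq_mul, suppFnR]

private lemma aux_suppFn_pos (hKc : IsCompact K) (h0K : (0 : Euc n) ∈ interior K)
    {ζ : Euc n} (hζ : ζ ≠ 0) : 0 < suppFnR K ζ := by
  rcases Metric.mem_nhds_iff.1 (mem_interior_iff_mem_nhds.1 h0K) with ⟨ε, hε, hball⟩
  have hζn : 0 < ‖ζ‖ := norm_pos_iff.2 hζ
  set p := (ε / (2 * ‖ζ‖)) • ζ with hp_def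
  have hpK : p ∈ K := by
    apply hball
    rw [Metric.mem_ball, dist_zero_right, hp_def, norm_smul, Real.norm_eq_abs,
      abs_of_pos (by positivity)]
    have : ε / (2 * ‖ζ‖) * ‖ζ‖ = ε / 2 := by field_simp
    rw [this]; linarith
  have hip : ⟪ζ, p⟫ = ε * ‖ζ‖ / 2 := by
    rw [hp_def, real_inner_smul_right, real_inner_self_eq_norm_sq]
    field_simp
  have hbdd : BddAbove ((fun η => ⟪ζ, η⟫) '' K) :=
    (hKc.image (continuous_const.inner continuous_id)).bddAbove
  have hle : ε * ‖ζ‖ / 2 ≤ suppFnR K ζ := by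
    rw [← hip]; exact le_csSup hbdd ⟨p, hpK, rfl⟩
  have : 0 < ε * ‖ζ‖ / 2 := by positivity
  linarith

private lemma aux_sInf_le_iff {V : ℝ≥0∞ → ℝ≥0∞} (hV : Monotone V) (c : ℝ≥0∞) {a : ℝ≥0∞}
    (_ : a ≠ ⊤) :
    sInf {t : ℝ≥0∞ | c ≤ V t} ≤ a ↔ ∀ b, a < b → c ≤ V b := by
  constructor
  · intro h b hb
    rcases sInf_lt_iff.1 (lt_of_le_of_lt h hb) with ⟨t, ht, htb⟩
    exact le_trans ht (hV htb.le)
  · intro h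
    by_contra hlt
    push_neg at hlt
    rcases exists_between hlt with ⟨b, hab, hbs⟩
    exact absurd (sInf_le (show b ∈ {t : ℝ≥0∞ | c ≤ V t} from h b hab)) (not_le.2 hbs)

private lemma aux_c_le_iff {n : ℕ} (hn : 1 ≤ n) {vol W : ℝ≥0∞} (h0 : vol ≠ 0) (htop : vol ≠ ⊤)
    (hW : W ≠ ⊤) {x : ℝ} (hx : 0 ≤ x) :
    vol * ENNReal.ofReal (x ^ n) ≤ W ↔ x ≤ ((W / vol).toReal) ^ ((1:ℝ)/n) := by
  have hn0 : (n : ℝ) ≠ 0 := by positivity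
  rw [mul_comm, ← ENNReal.le_div_iff_mul_le (Or.inl h0) (Or.inl htop)]
  have hq : W / vol ≠ ⊤ := (ENNReal.div_lt_top hW h0).ne
  rw [ENNReal.ofReal_le_iff_le_toReal hq]
  set q := (W / vol).toReal with hq_def
  have hq0 : 0 ≤ q := ENNReal.toReal_nonneg
  constructor
  · intro h
    have h2 : ((x ^ n : ℝ)) ^ ((1:ℝ)/n) ≤ q ^ ((1:ℝ)/n) :=
      Real.rpow_le_rpow (by positivity) h (by positivity)
    rwa [← Real.rpow_natCast x n, ← Real.rpow_mul hx, mul_one_div, div_self hn0,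
      Real.rpow_one] at h2
  · intro h
    have h2 : x ^ n ≤ (q ^ ((1:ℝ)/n)) ^ n := pow_le_pow_left₀ hx h n
    rwa [← Real.rpow_natCast (q ^ ((1:ℝ)/n)) n, ← Real.rpow_mul hq0, one_div_mul_cancel hn0,
      Real.rpow_one] at h2

end AuxLemmas

set_option maxHeartbeats 2000000 in
/-- **Lemma (the function `s ↦ h_{{Φ_{•K} ≤ s}}(ξ) − s` attains its maximum).** -/
theorem statement14 {n : ℕ} (hn : 1 ≤ n) (K : Set (Euc n)) (hK : IsConvexBody K)
    (h0K : (0 : Euc n) ∈ interior K)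
    (Φ : Euc n → ℝ≥0∞) (hΦ : IsNYoung Φ)
    (hΦfin : ∀ x : Euc n, x ≠ 0 → 0 < Φ x ∧ Φ x ≠ ⊤)
    (ξ : Euc n) (hξ : ξ ≠ 0) :
    (∃ s₀ : ℝ, 0 ≤ s₀ ∧ ∀ s : ℝ, 0 ≤ s →
        suppFnR {θ : Euc n | youngSymm K (yconj Φ) θ ≤ ENNReal.ofReal s} ξ - s ≤
        suppFnR {θ : Euc n | youngSymm K (yconj Φ) θ ≤ ENNReal.ofReal s₀} ξ - s₀) ∧
    ((∀ s : ℝ, 0 ≤ s →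
        suppFnR {θ : Euc n | youngSymm K (yconj Φ) θ ≤ ENNReal.ofReal s} ξ - s ≤
        suppFnR {θ : Euc n | youngSymm K (yconj Φ) θ ≤ ENNReal.ofReal 0} ξ - 0) →
      0 < suppFnR {θ : Euc n | youngSymm K (yconj Φ) θ ≤ ENNReal.ofReal 0} ξ ∧
      (interior {θ : Euc n | youngSymm K (yconj Φ) θ ≤ 0}).Nonempty ∧
      (interior {θ : Euc n | yconj Φ θ ≤ 0}).Nonempty) := by
  classical
  obtain ⟨hKc, hKconv⟩ := hK
  have hn0 : (n : ℝ) ≠ 0 := by positivity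
  have sphere_ne : ∀ c : ℝ, 0 < c → ∃ x : Euc n, ‖x‖ = c := by
    intro c hc
    refine ⟨c • EuclideanSpace.single (⟨0, hn⟩ : Fin n) (1:ℝ), ?_⟩
    rw [norm_smul, EuclideanSpace.norm_single, norm_one, mul_one, Real.norm_eq_abs,
      abs_of_pos hc]
  have hfin : ∀ x : Euc n, Φ x ≠ ⊤ := by
    intro x
    rcases eq_or_ne x 0 with rfl | hx
    · rw [hΦ.map_zero]; exact ENNReal.zero_ne_top
    · exact (hΦfin x hx).2
  set f : Euc n → ℝ := fun x => (Φ x).toReal with hfdef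
  have hfc : Continuous f := aux_continuous hΦ.convex hfin
  have hfnn : ∀ x, 0 ≤ f x := fun x => ENNReal.toReal_nonneg
  set Ψ : Euc n → ℝ≥0∞ := yconj Φ with hΨdef
  have hΨlsc : LowerSemicontinuous Ψ := by
    apply lowerSemicontinuous_iSup
    intro η
    exact ((ENNReal.continuous_sub_right (Φ η)).comp
      (ENNReal.continuous_ofReal.comp (continuous_id.inner continuous_const))).lowerSemicontinuous
  have hclosed : ∀ b : ℝ≥0∞, IsClosed {ξ' : Euc n | Ψ ξ' ≤ b} := fun b =>
    hΨlsc.isClosed_preimage b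
  have hVmono : ∀ a b : ℝ≥0∞, a ≤ b →
      volume {η : Euc n | Ψ η ≤ a} ≤ volume {η : Euc n | Ψ η ≤ b} :=
    fun a b hab => measure_mono fun ξ' h => le_trans h hab
  have hCdef : ∀ δ : ℝ, 0 < δ → ∃ C : ℝ, 0 ≤ C ∧ ∀ x : Euc n, ‖x‖ = δ → f x ≤ C := by
    intro δ hδ
    have hbdd : BddAbove (f '' Metric.sphere (0:Euc n) δ) :=
      ((isCompact_sphere (0:Euc n) δ).image hfc).bddAbove
    obtain ⟨x, hx⟩ := sphere_ne δ hδ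
    refine ⟨sSup (f '' Metric.sphere (0:Euc n) δ), ?_, fun y hy =>
      le_csSup hbdd ⟨y, mem_sphere_zero_iff_norm.2 hy, rfl⟩⟩
    exact le_trans (hfnn x) (le_csSup hbdd ⟨x, mem_sphere_zero_iff_norm.2 hx, rfl⟩)
  have hVfin : ∀ b : ℝ≥0∞, b ≠ ⊤ → volume {η : Euc n | Ψ η ≤ b} < ⊤ := by
    intro b hb
    obtain ⟨C, hC0, hC⟩ := hCdef 1 one_pos
    have h1 : {ξ' : Euc n | Ψ ξ' ≤ ENNReal.ofReal b.toReal}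
        ⊆ Metric.closedBall 0 ((b.toReal + C) / 1) :=
      aux_psi_sublevel hfin one_pos hC0 ENNReal.toReal_nonneg hC
    rw [ENNReal.ofReal_toReal hb] at h1
    exact lt_of_le_of_lt (measure_mono h1) (isCompact_closedBall _ _).measure_lt_top
  have hvol0 : volume K ≠ 0 := by
    have h1 : 0 < volume (interior K) := isOpen_interior.measure_pos volume ⟨0, h0K⟩
    exact (lt_of_lt_of_le h1 (measure_mono interior_subset)).ne'
  have hvoltop : volume K ≠ ⊤ := hKc.measure_lt_top.ne
  set W : ℝ → ℝ≥0∞ := fun s =>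
    ⨅ (b : ℝ≥0∞) (_ : ENNReal.ofReal s < b), volume {η : Euc n | Ψ η ≤ b} with hWdef
  have hWleV : ∀ s : ℝ, ∀ b : ℝ≥0∞, ENNReal.ofReal s < b →
      W s ≤ volume {η : Euc n | Ψ η ≤ b} := fun s b hb => iInf₂_le b hb
  have hWfin : ∀ s : ℝ, W s ≠ ⊤ := by
    intro s
    have h1 : W s ≤ volume {η : Euc n | Ψ η ≤ ENNReal.ofReal s + 1} :=
      hWleV s _ (ENNReal.lt_add_right ENNReal.ofReal_ne_top one_ne_zero)
    exact (lt_of_le_of_lt h1 (hVfin _ (by simp))).ne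
  have hWmono : Monotone W := fun s t hst =>
    le_iInf₂ fun b hb => hWleV s b (lt_of_le_of_lt (ENNReal.ofReal_le_ofReal hst) hb)
  have hVleW : ∀ s : ℝ, volume {η : Euc n | Ψ η ≤ ENNReal.ofReal s} ≤ W s := fun s =>
    le_iInf₂ fun b hb => hVmono _ _ hb.le
  set g : ℝ → ℝ := fun s => ((W s / volume K).toReal) ^ ((1:ℝ)/n) with hgdef
  have hgnn : ∀ s, 0 ≤ g s := fun s => Real.rpow_nonneg ENNReal.toReal_nonneg _
  have hgmono : Monotone g := by
    intro s t hst
    refine Real.rpow_le_rpow ENNReal.toReal_nonneg ?_ (by positivity)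
    exact ENNReal.toReal_mono ((ENNReal.div_lt_top (hWfin t) hvol0).ne)
      (ENNReal.div_le_div_right (hWmono hst) _)
  have hsub_eq : ∀ s : ℝ, {θ : Euc n | youngSymm K Ψ θ ≤ ENNReal.ofReal s}
      = {θ : Euc n | gauge K (-θ) ≤ g s} := by
    intro s
    ext θ
    simp only [mem_setOf_eq, youngSymm]
    have h1 := aux_sInf_le_iff (V := fun b => volume {η : Euc n | Ψ η ≤ b})
      (fun a b hab => hVmono a b hab) (volume K * ENNReal.ofReal (gauge K (-θ) ^ n))
      (a := ENNReal.ofReal s) ENNReal.ofReal_ne_top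
    rw [h1]
    constructor
    · intro h
      have h2 : volume K * ENNReal.ofReal (gauge K (-θ) ^ n) ≤ W s := le_iInf₂ fun b hb => h b hb
      exact (aux_c_le_iff hn hvol0 hvoltop (hWfin s) (gauge_nonneg _)).1 h2
    · intro h b hb
      exact le_trans ((aux_c_le_iff hn hvol0 hvoltop (hWfin s) (gauge_nonneg _)).2 h)
        (hWleV s b hb)
  set hsup : ℝ := suppFnR K (-ξ) with hsupdef
  have hsup_pos : 0 < hsup := aux_suppFn_pos hKc h0K (neg_ne_zero.2 hξ)
  have hφeq : ∀ s : ℝ, suppFnR {θ : Euc n | youngSymm K Ψ θ ≤ ENNReal.ofReal s} ξ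
      = g s * hsup := by
    intro s
    rw [hsub_eq s, aux_suppFn hKc hKconv h0K (hgnn s) ξ]
  -- right continuity of g
  have hgrc : ∀ s : ℝ, 0 ≤ s → ∀ ε : ℝ, 0 < ε → ∃ t : ℝ, s < t ∧ g t ≤ g s + ε := by
    intro s hs ε hε
    set F : ℝ → ℝ := fun x => (x / (volume K).toReal) ^ ((1:ℝ)/n) with hFdef
    have hgF : ∀ u : ℝ, g u = F ((W u).toReal) := by
      intro u
      rw [hgdef, hFdef]
      simp only [ENNReal.toReal_div]
    have hFc : ContinuousAt F ((W s).toReal) :=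
      (continuousAt_id.div_const _).rpow_const (Or.inr (by positivity))
    rcases Metric.continuousAt_iff.1 hFc ε hε with ⟨δ, hδ, hδ'⟩
    have h1 : W s < W s + ENNReal.ofReal (δ/2) :=
      ENNReal.lt_add_right (hWfin s) (by simp only [ne_eq, ENNReal.ofReal_eq_zero, not_le]; linarith)
    set cb := W s + ENNReal.ofReal (δ/2) with hcb
    rw [hWdef] at h1
    simp only [iInf_lt_iff] at h1
    obtain ⟨b, hb, hVb⟩ := h1
    obtain ⟨t, hst, htb⟩ : ∃ t : ℝ, s < t ∧ ENNReal.ofReal t < b := by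
      rcases eq_or_ne b ⊤ with rfl | hbtop
      · exact ⟨s + 1, by linarith, ENNReal.ofReal_lt_top⟩
      · have hsb : s < b.toReal := (ENNReal.ofReal_lt_iff_lt_toReal hs hbtop).1 hb
        refine ⟨(s + b.toReal)/2, by linarith, ?_⟩
        rw [ENNReal.ofReal_lt_iff_lt_toReal (by linarith) hbtop]
        linarith
    have hWt2 : W t < W s + ENNReal.ofReal (δ/2) := lt_of_le_of_lt (hWleV t b htb) hVb
    have ha1 : (W s).toReal ≤ (W t).toReal :=
      ENNReal.toReal_mono (hWfin t) (hWmono hst.le)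
    have ha2 : (W t).toReal < (W s).toReal + δ/2 := by
      calc (W t).toReal < (W s + ENNReal.ofReal (δ/2)).toReal :=
          (ENNReal.toReal_lt_toReal (hWfin t)
            (by simp [ENNReal.add_ne_top, hWfin s])).2 hWt2
        _ = (W s).toReal + δ/2 := by
          rw [ENNReal.toReal_add (hWfin s) ENNReal.ofReal_ne_top,
            ENNReal.toReal_ofReal (by linarith)]
    have hdist : dist ((W t).toReal) ((W s).toReal) < δ := by
      rw [Real.dist_eq, abs_of_nonneg (by linarith)]; linarith
    have hFd := hδ' hdist
    rw [Real.dist_eq] at hFd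
    refine ⟨t, hst, ?_⟩
    rw [hgF t, hgF s]
    have := abs_lt.1 hFd
    linarith [this.2]
  -- volume computations
  set ω := volume (Metric.ball (0:Euc n) 1) with hωdef
  have hωtop : ω ≠ ⊤ := measure_ball_lt_top.ne
  have hω0 : ω ≠ 0 := (Metric.measure_ball_pos volume 0 one_pos).ne'
  set E : ℝ := (ω.toReal / (volume K).toReal) ^ ((1:ℝ)/n) with hEdef
  have hE : 0 < E := Real.rpow_pos_of_pos
    (div_pos (ENNReal.toReal_pos hω0 hωtop) (ENNReal.toReal_pos hvol0 hvoltop)) _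
  have hcomp : ∀ R : ℝ, 0 ≤ R →
      ((ENNReal.ofReal (R ^ n) * ω / volume K).toReal) ^ ((1:ℝ)/n) = R * E := by
    intro R hR
    rw [hEdef, ENNReal.toReal_div, ENNReal.toReal_mul, ENNReal.toReal_ofReal (by positivity),
      mul_div_assoc, Real.mul_rpow (by positivity) (by positivity)]
    congr 1
    rw [← Real.rpow_natCast R n, ← Real.rpow_mul hR, mul_one_div, div_self hn0, Real.rpow_one]
  have hballvol : ∀ R : ℝ, 0 ≤ R →
      volume (Metric.closedBall (0:Euc n) R) = ENNReal.ofReal (R ^ n) * ω := by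
    intro R hR
    rw [hωdef, Measure.addHaar_closedBall volume 0 hR, finrank_euclideanSpace_fin]
  have hgleR : ∀ δ C : ℝ, 0 < δ → 0 ≤ C → (∀ x : Euc n, ‖x‖ = δ → f x ≤ C) →
      ∀ s : ℝ, 0 ≤ s → g s ≤ (s + 1 + C)/δ * E := by
    intro δ C hδ hC0 hC s hs
    have h1 : W s ≤ volume {η : Euc n | Ψ η ≤ ENNReal.ofReal (s+1)} :=
      hWleV s _ (by rw [ENNReal.ofReal_lt_ofReal_iff (by linarith)]; linarith)
    have h2 : volume {η : Euc n | Ψ η ≤ ENNReal.ofReal (s+1)}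
        ≤ volume (Metric.closedBall (0:Euc n) ((s+1+C)/δ)) :=
      measure_mono (aux_psi_sublevel hfin hδ hC0 (by linarith) hC)
    have h4 : g s ≤ ((ENNReal.ofReal (((s+1+C)/δ)^n) * ω / volume K).toReal) ^ ((1:ℝ)/n) := by
      refine Real.rpow_le_rpow ENNReal.toReal_nonneg ?_ (by positivity)
      refine ENNReal.toReal_mono ?_ (ENNReal.div_le_div_right ?_ _)
      · exact (ENNReal.div_lt_top
          (by simp [ENNReal.mul_ne_top, hωtop, ENNReal.ofReal_ne_top]) hvol0).ne
      · exact le_trans h1 (h2.trans_eq (hballvol _ (by positivity)))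
    rwa [hcomp _ (by positivity)] at h4
  obtain ⟨C₀, hC₀0, hC₀⟩ := hCdef (1 + 2 * (E * hsup)) (by positivity)
  have hδ₀ : (0:ℝ) < 1 + 2 * (E * hsup) := by positivity
  set S₀ : ℝ := 1 + C₀ with hS₀def
  have hS₀ : 0 < S₀ := by rw [hS₀def]; linarith
  set φfun : ℝ → ℝ := fun s => g s * hsup - s with hφfun
  have hcoer : ∀ s : ℝ, S₀ ≤ s → φfun s ≤ 0 := by
    intro s hs
    have hs0 : 0 ≤ s := le_trans hS₀.le hs
    have h1 := hgleR _ _ hδ₀ hC₀0 hC₀ s hs0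
    have h2 : (s + 1 + C₀)/(1 + 2*(E*hsup)) * E * hsup ≤ (s + 1 + C₀)/2 := by
      rw [div_mul_eq_mul_div, div_mul_eq_mul_div, div_le_div_iff₀ hδ₀ two_pos]
      have ha : (0:ℝ) ≤ s + 1 + C₀ := by linarith
      nlinarith [mul_nonneg (mul_nonneg ha hE.le) hsup_pos.le]
    have h3 : g s * hsup ≤ (s+1+C₀)/2 :=
      le_trans (mul_le_mul_of_nonneg_right h1 hsup_pos.le) h2
    have : φfun s = g s * hsup - s := rfl
    rw [this]
    rw [hS₀def] at hs
    linarith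
  have hφle : ∀ s ∈ Icc (0:ℝ) S₀, φfun s ≤ g S₀ * hsup := by
    intro s hs
    have h1 := mul_le_mul_of_nonneg_right (hgmono hs.2) hsup_pos.le
    have : φfun s = g s * hsup - s := rfl
    rw [this]
    linarith [hs.1]
  have hne : (φfun '' Icc 0 S₀).Nonempty := ⟨φfun 0, 0, ⟨le_refl 0, hS₀.le⟩, rfl⟩
  have hbdd : BddAbove (φfun '' Icc 0 S₀) :=
    ⟨g S₀ * hsup, by rintro y ⟨s, hs, rfl⟩; exact hφle s hs⟩
  set A := sSup (φfun '' Icc 0 S₀) with hAdef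
  have hseq : ∀ k : ℕ, ∃ s, s ∈ Icc (0:ℝ) S₀ ∧ A - 1/(k+1) < φfun s := by
    intro k
    have hlt : A - 1/((k:ℝ)+1) < A := by
      have : (0:ℝ) < 1/((k:ℝ)+1) := by positivity
      linarith
    obtain ⟨y, hy, hlty⟩ := exists_lt_of_lt_csSup hne hlt
    obtain ⟨s, hsm, rfl⟩ := hy
    exact ⟨s, hsm, hlty⟩
  choose u hu hu' using hseq
  obtain ⟨s₁, hs₁, σ, hσ, hσt⟩ := (isCompact_Icc (a := (0:ℝ)) (b := S₀)).tendsto_subseq hu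
  have hAub : ∀ s ∈ Icc (0:ℝ) S₀, φfun s ≤ A := fun s hs => le_csSup hbdd ⟨s, hs, rfl⟩
  have hAφ : A ≤ φfun s₁ := by
    clear_value A φfun hsup g
    have key : ∀ ε : ℝ, 0 < ε → A ≤ φfun s₁ + ε * (hsup + 2) := by
      intro ε hε
      obtain ⟨t, hts, hgt⟩ := hgrc s₁ hs₁.1 ε hε
      obtain ⟨k₁, hk₁⟩ := exists_nat_one_div_lt hε
      have hmin : 0 < min ε (t - s₁) := lt_min hε (by linarith)
      obtain ⟨N, hN⟩ := (Metric.tendsto_atTop.1 hσt) (min ε (t - s₁)) hmin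
      set k := max N k₁ with hk
      have hdist := hN k (le_max_left _ _)
      simp only [Function.comp_apply] at hdist
      rw [Real.dist_eq] at hdist
      set s' := u (σ k) with hs'
      have habs := abs_lt.1 hdist
      have h1 : A - ε < φfun s' := by
        have h2 := hu' (σ k)
        have h3 : 1/((σ k : ℝ)+1) ≤ 1/((k₁:ℝ)+1) := by
          apply one_div_le_one_div_of_le (by positivity)
          have hkk : (k₁ : ℕ) ≤ σ k := le_trans (le_max_right N k₁) hσ.le_apply
          have : (k₁ : ℝ) ≤ (σ k : ℝ) := by exact_mod_cast hkk
          linarith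
        rw [← hs'] at h2
        linarith [h2, h3, hk₁]
      have hcase : φfun s' ≤ φfun s₁ + ε * (hsup + 1) := by
        rcases le_or_gt s' s₁ with hle | hgtr
        · have hgg := mul_le_mul_of_nonneg_right (hgmono hle) hsup_pos.le
          have hd2 : s₁ - s' ≤ ε := by
            have := habs.1
            have h5 := min_le_left ε (t - s₁)
            linarith
          simp only [hφfun]
          nlinarith [hsup_pos]
        · have hst' : s' ≤ t := by
            have h6 := habs.2
            have h5 := min_le_right ε (t - s₁)
            linarith
          have hg' : g s' ≤ g s₁ + ε := le_trans (hgmono hst') hgt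
          have hgg := mul_le_mul_of_nonneg_right hg' hsup_pos.le
          simp only [hφfun]
          nlinarith [hsup_pos]
      linarith
    by_contra hcon
    push_neg at hcon
    have hd : 0 < (A - φfun s₁) / (2 * (hsup + 2)) := by
      have : 0 < A - φfun s₁ := by linarith
      positivity
    have hk2 := key _ hd
    have heq : (A - φfun s₁)/(2*(hsup+2)) * (hsup+2) = (A - φfun s₁)/2 := by
      field_simp
    rw [heq] at hk2
    linarith
  have hmax : ∀ s : ℝ, 0 ≤ s → φfun s ≤ φfun s₁ := by
    intro s hs
    rcases le_or_gt s S₀ with h | h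
    · exact le_trans (hAub s ⟨hs, h⟩) hAφ
    · have h1 : φfun s ≤ 0 := hcoer s h.le
      have h2 : 0 ≤ φfun 0 := by
        have e0 : φfun 0 = g 0 * hsup - 0 := rfl
        rw [e0, sub_zero]
        exact mul_nonneg (hgnn 0) hsup_pos.le
      exact le_trans h1 (le_trans h2 (le_trans (hAub 0 ⟨le_refl 0, hS₀.le⟩) hAφ))
  constructor
  · refine ⟨s₁, hs₁.1, fun s hs => ?_⟩
    rw [hφeq s, hφeq s₁]
    exact hmax s hs
  · intro Hmax
    have Hmax' : ∀ s : ℝ, 0 ≤ s → φfun s ≤ φfun 0 := by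
      intro s hs
      have h := Hmax s hs
      rw [hφeq s, hφeq 0] at h
      exact h
    have hg0 : 0 < g 0 := by
      by_contra hcon
      push_neg at hcon
      have hg00 : g 0 = 0 := le_antisymm hcon (hgnn 0)
      set c : ℝ := E * hsup / 2 with hcdef
      have hc : 0 < c := by positivity
      obtain ⟨x₀, hx₀mem, hx₀min⟩ := (isCompact_sphere (0:Euc n) c).exists_isMinOn
        (by obtain ⟨x, hx⟩ := sphere_ne c hc
            exact ⟨x, mem_sphere_zero_iff_norm.2 hx⟩)
        hfc.continuousOn
      set m := f x₀ with hmdef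
      have hx₀n : ‖x₀‖ = c := mem_sphere_zero_iff_norm.1 hx₀mem
      have hm0 : 0 < m := by
        have hx₀ne : x₀ ≠ 0 := by
          intro h0
          rw [h0, norm_zero] at hx₀n
          exact hc.ne' hx₀n.symm
        exact ENNReal.toReal_pos (hΦfin x₀ hx₀ne).1.ne' (hfin x₀)
      have hmle : ∀ x : Euc n, ‖x‖ = c → m ≤ f x := fun x hx =>
        hx₀min (mem_sphere_zero_iff_norm.2 hx)
      have hgrow := aux_growth hΦ.convex hfin hΦ.map_zero hc hmle
      set s₂ := min m 1 with hs₂def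
      have hs₂ : 0 < s₂ := lt_min hm0 one_pos
      have hball : Metric.closedBall (0:Euc n) (s₂/c)
          ⊆ {ξ' : Euc n | Ψ ξ' ≤ ENNReal.ofReal s₂} := by
        intro θ hθ
        rw [Metric.mem_closedBall, dist_zero_right] at hθ
        have hθc : ‖θ‖ * c ≤ s₂ := (le_div_iff₀ hc).1 hθ
        have h1 : ‖θ‖ * c ≤ m := le_trans hθc (min_le_left _ _)
        have h2 := aux_psi_upper hfin hc hgrow θ h1
        refine le_trans h2 (ENNReal.ofReal_le_ofReal ?_)
        calc c * ‖θ‖ = ‖θ‖ * c := mul_comm _ _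
          _ ≤ s₂ := hθc
      have h3 : ENNReal.ofReal ((s₂/c)^n) * ω ≤ W s₂ := by
        refine le_trans ?_ (hVleW s₂)
        calc ENNReal.ofReal ((s₂/c)^n) * ω
            = volume (Metric.closedBall (0:Euc n) (s₂/c)) := (hballvol _ (by positivity)).symm
          _ ≤ volume {η : Euc n | Ψ η ≤ ENNReal.ofReal s₂} := measure_mono hball
      have h4 : s₂/c * E ≤ g s₂ := by
        have h5 : ((ENNReal.ofReal ((s₂/c)^n) * ω / volume K).toReal) ^ ((1:ℝ)/n) ≤ g s₂ := by
          refine Real.rpow_le_rpow ENNReal.toReal_nonneg ?_ (by positivity)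
          exact ENNReal.toReal_mono ((ENNReal.div_lt_top (hWfin s₂) hvol0).ne)
            (ENNReal.div_le_div_right h3 _)
        rwa [hcomp _ (by positivity)] at h5
      have h6 := Hmax' s₂ hs₂.le
      have e1 : φfun s₂ = g s₂ * hsup - s₂ := rfl
      have e2 : φfun 0 = g 0 * hsup - 0 := rfl
      rw [e1, e2, hg00] at h6
      have h7 : g s₂ * hsup ≤ s₂ := by linarith
      have h8 : s₂/c * E * hsup = 2 * s₂ := by
        rw [hcdef]
        field_simp
      nlinarith [mul_le_mul_of_nonneg_right h4 hsup_pos.le]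
    refine ⟨?_, ?_, ?_⟩
    · rw [hφeq 0]
      exact mul_pos hg0 hsup_pos
    · have h0eq : {θ : Euc n | youngSymm K Ψ θ ≤ 0}
          = {θ : Euc n | gauge K (-θ) ≤ g 0} := by
        rw [← hsub_eq 0, ENNReal.ofReal_zero]
      rw [h0eq]
      rcases Metric.mem_nhds_iff.1 (mem_interior_iff_mem_nhds.1 h0K) with ⟨ε, hε, hball⟩
      have hsubset : Metric.ball (0:Euc n) (g 0 * (ε/2))
          ⊆ {θ : Euc n | gauge K (-θ) ≤ g 0} := by
        intro θ hθ
        rw [Metric.mem_ball, dist_zero_right] at hθ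
        have hmem : -θ ∈ g 0 • K := by
          refine ⟨(g 0)⁻¹ • (-θ), ?_, ?_⟩
          · apply hball
            rw [Metric.mem_ball, dist_zero_right, norm_smul, Real.norm_eq_abs,
              abs_of_pos (by positivity), norm_neg]
            have hlt : (g 0)⁻¹ * ‖θ‖ < (g 0)⁻¹ * (g 0 * (ε/2)) :=
              mul_lt_mul_of_pos_left hθ (by positivity)
            have heq2 : (g 0)⁻¹ * (g 0 * (ε/2)) = ε/2 := by
              field_simp
            rw [heq2] at hlt
            linarith
          · show g 0 • (g 0)⁻¹ • (-θ) = -θ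
            rw [smul_inv_smul₀ hg0.ne']
        exact gauge_le_of_mem hg0.le hmem
      exact ⟨0, (interior_maximal hsubset Metric.isOpen_ball)
        (Metric.mem_ball_self (by positivity))⟩
    · have hW0 : W 0 ≠ 0 := by
        intro h0
        have hgz : g 0 = 0 := by
          rw [hgdef]
          simp only [h0, ENNReal.zero_div, ENNReal.toReal_zero]
          exact Real.zero_rpow (by positivity)
        exact hg0.ne' hgz
      have hiter : {θ : Euc n | Ψ θ ≤ 0} = ⋂ (k : ℕ), {θ : Euc n | Ψ θ ≤ ((k:ℝ≥0∞)+1)⁻¹} := by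
        ext θ
        simp only [mem_iInter, mem_setOf_eq]
        constructor
        · intro h k; exact le_trans h (by simp)
        · intro h
          by_contra hne'
          have hne2 : Ψ θ ≠ 0 := by
            intro h0; exact hne' (le_of_eq h0)
          obtain ⟨k, hk⟩ := ENNReal.exists_inv_nat_lt hne2
          have h2 : ((k:ℝ≥0∞)+1)⁻¹ ≤ ((k:ℝ≥0∞))⁻¹ :=
            ENNReal.inv_le_inv.2 le_self_add
          exact absurd (le_trans (h k) h2) (not_le.2 hk)
      have hconvex : Convex ℝ {θ : Euc n | Ψ θ ≤ 0} := by
        have hrep : {θ : Euc n | Ψ θ ≤ 0} = ⋂ (η : Euc n), {θ : Euc n | ⟪θ, η⟫ ≤ f η} := by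
          ext θ
          simp only [mem_iInter, mem_setOf_eq, hΨdef, yconj, iSup_le_iff]
          apply forall_congr'
          intro η
          rw [← ENNReal.ofReal_toReal (hfin η)]
          constructor
          · intro h
            have h2 : ENNReal.ofReal ⟪θ, η⟫ ≤ ENNReal.ofReal (Φ η).toReal := by
              rwa [← tsub_eq_zero_iff_le, ← le_zero_iff]
            rcases le_or_gt ⟪θ, η⟫ 0 with h3 | h3
            · exact le_trans h3 (hfnn η)
            · exact (ENNReal.ofReal_le_ofReal_iff ENNReal.toReal_nonneg).1 h2
          · intro h
            rw [le_zero_iff, tsub_eq_zero_iff_le]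
            exact ENNReal.ofReal_le_ofReal h
        rw [hrep]
        exact convex_iInter fun η => convex_halfSpace_le
          ⟨fun a b => inner_add_left a b η, fun r x => real_inner_smul_left x η r⟩ (f η)
      have hμpos : 0 < volume {θ : Euc n | Ψ θ ≤ 0} := by
        rw [hiter]
        have hanti : Antitone (fun k : ℕ => {θ : Euc n | Ψ θ ≤ ((k:ℝ≥0∞)+1)⁻¹}) := by
          intro k l hkl θ hθ
          refine le_trans hθ (ENNReal.inv_le_inv.2 ?_)
          have : (k:ℝ≥0∞) ≤ (l:ℝ≥0∞) := by exact_mod_cast hkl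
          exact add_le_add_left this 1
        rw [hanti.measure_iInter (fun k => (hclosed _).nullMeasurableSet)
          ⟨0, (hVfin _ (by simp)).ne⟩]
        refine lt_of_lt_of_le (pos_iff_ne_zero.2 hW0) (le_iInf fun k => ?_)
        refine hWleV 0 _ ?_
        rw [ENNReal.ofReal_zero]
        refine ENNReal.inv_pos.2 ?_
        exact ENNReal.add_ne_top.2 ⟨ENNReal.natCast_ne_top k, ENNReal.one_ne_top⟩
      by_contra hcon
      rw [not_nonempty_iff_eq_empty] at hcon
      have hfront : volume (frontier {θ : Euc n | Ψ θ ≤ 0}) = 0 :=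
        hconvex.addHaar_frontier volume
      have hzero : volume {θ : Euc n | Ψ θ ≤ 0} = 0 := by
        refine measure_mono_null ?_ hfront
        rw [frontier, (hclosed 0).closure_eq, hcon, diff_empty]
      exact hμpos.ne' hzero

end
end
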